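/- arXiv:2509.18027 — 12 statements merged into one kernel-verified Lean document; each statement's English description precedes it below -/
import Mathlib

section
/- Let T be a d×d complex matrix such that 0 lies in the interior of the numerical range W(T) (as a subset of ℂ). If A, B, C are n×n complex matrices such that A ⊗ I_d + B ⊗ T + C ⊗ Tᴴ is positive semidefinite, then A is positive semidefinite and C = Bᴴ. -/
open Matrix Kronecker
open scoped ComplexOrder

/-- The numerical range of a complex matrix: `{ xᴴ A x : ‖x‖ = 1 }`. -/
def numericalRange {d : ℕ} (A : Matrix (Fin d) (Fin d) ℂ) : Set ℂ :=
  {z : ℂ | ∃ x : Fin d → ℂ, star x ⬝ᵥ x = 1 ∧ star x ⬝ᵥ (A *ᵥ x) = z}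

/-!
Evaluating the quadratic form of `A ⊗ I + B ⊗ T + C ⊗ Tᴴ` at a product vector `y ⊗ x` with `‖x‖ = 1`
gives `a + b w + c w̄`, where `a, b, c` are the quadratic forms of `A, B, C` at `y` and
`w = xᴴ T x ∈ W(T)`. This is nonnegative for all `w` near `0`; in particular it is real there, and
testing `w = 0, r, i r` gives `a ≥ 0` and `c = b̄`. Over `ℂ` a matrix is determined by its quadratic
form, so `A ≥ 0` and `C = Bᴴ`.
-/

namespace Matrix

variable {m n R : Type*} [Fintype m] [Fintype n]

theorem kronecker_mulVec_prod [CommSemiring R] (P : Matrix m m R) (Q : Matrix n n R)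
    (y : m → R) (x : n → R) :
    (P ⊗ₖ Q) *ᵥ (fun p => y p.1 * x p.2) = fun p => (P *ᵥ y) p.1 * (Q *ᵥ x) p.2 := by
  ext ⟨i, k⟩
  simp only [mulVec, dotProduct, kroneckerMap_apply, Fintype.sum_prod_type, Finset.sum_mul_sum]
  exact Finset.sum_congr rfl fun _ _ => Finset.sum_congr rfl fun _ _ => by ring

theorem prod_dotProduct_prod [CommSemiring R] (u u' : m → R) (v v' : n → R) :
    (fun p : m × n => u p.1 * v p.2) ⬝ᵥ (fun p => u' p.1 * v' p.2) = (u ⬝ᵥ u') * (v ⬝ᵥ v') := by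
  simp only [dotProduct, Fintype.sum_prod_type, Finset.sum_mul_sum]
  exact Finset.sum_congr rfl fun _ _ => Finset.sum_congr rfl fun _ _ => by ring

theorem star_dotProduct_kronecker_mulVec_prod [CommSemiring R] [StarRing R]
    (P : Matrix m m R) (Q : Matrix n n R) (y : m → R) (x : n → R) :
    star (fun p : m × n => y p.1 * x p.2) ⬝ᵥ ((P ⊗ₖ Q) *ᵥ fun p => y p.1 * x p.2)
      = (star y ⬝ᵥ (P *ᵥ y)) * (star x ⬝ᵥ (Q *ᵥ x)) := by
  rw [kronecker_mulVec_prod, ← prod_dotProduct_prod]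
  congr 1
  ext p
  exact star_mul' _ _

theorem star_dotProduct_conjTranspose_mulVec [CommSemiring R] [StarRing R]
    (M : Matrix n n R) (x : n → R) :
    star x ⬝ᵥ (Mᴴ *ᵥ x) = star (star x ⬝ᵥ (M *ᵥ x)) := by
  rw [star_dotProduct, star_mulVec, conjTranspose_conjTranspose, ← dotProduct_mulVec]

variable [DecidableEq n]

theorem ext_star_dotProduct_mulVec {M N : Matrix n n ℂ}
    (h : ∀ x, star x ⬝ᵥ (M *ᵥ x) = star x ⬝ᵥ (N *ᵥ x)) : M = N := by
  refine toEuclideanLin.injective <| (ext_inner_map _ _).mp fun x => ?_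
  rw [← inner_conj_symm (toEuclideanLin M x), ← inner_conj_symm (toEuclideanLin N x),
    EuclideanSpace.inner_eq_star_dotProduct, EuclideanSpace.inner_eq_star_dotProduct,
    dotProduct_comm, dotProduct_comm _ (star _)]
  exact congrArg _ (h x.ofLp)

theorem posSemidef_of_forall_nonneg {M : Matrix n n ℂ} (h : ∀ x, 0 ≤ star x ⬝ᵥ (M *ᵥ x)) :
    M.PosSemidef := by
  refine .of_dotProduct_mulVec_nonneg (ext_star_dotProduct_mulVec fun x => ?_) h
  rw [star_dotProduct_conjTranspose_mulVec, Complex.star_def,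
    Complex.conj_eq_iff_im.mpr (Complex.nonneg_iff.mp (h x)).2.symm]

end Matrix

open ComplexConjugate Filter Topology

theorem Complex.nonneg_and_eq_conj_of_eventually_nonneg {a b c : ℂ}
    (h : ∀ᶠ w in 𝓝 0, 0 ≤ a + b * w + c * conj w) : 0 ≤ a ∧ c = conj b := by
  obtain ⟨ε, hε, hball⟩ := Metric.eventually_nhds_iff.mp h
  have nonneg : ∀ w : ℂ, ‖w‖ < ε → 0 ≤ a + b * w + c * conj w := fun w hw =>
    hball (by rwa [dist_zero_right])
  have im_eq_zero : ∀ w : ℂ, ‖w‖ < ε → (a + b * w + c * conj w).im = 0 := fun w hw =>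
    (Complex.nonneg_iff.mp (nonneg w hw)).2.symm
  have ha : 0 ≤ a := by simpa using nonneg 0 (by simpa using hε)
  have hr : ‖((ε / 2 : ℝ) : ℂ)‖ < ε := by
    rw [Complex.norm_real, Real.norm_of_nonneg (by positivity)]; linarith
  have hrI : ‖((ε / 2 : ℝ) : ℂ) * Complex.I‖ < ε := by simpa using hr
  have im_at_r := im_eq_zero _ hr
  have im_at_rI := im_eq_zero _ hrI
  have ha_im : a.im = 0 := (Complex.nonneg_iff.mp ha).2.symm
  simp only [Complex.add_im, Complex.mul_im, Complex.ofReal_re, Complex.ofReal_im,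
    Complex.conj_ofReal, map_mul, Complex.conj_I, Complex.mul_re, Complex.I_re, Complex.I_im,
    Complex.neg_re, Complex.neg_im, ha_im] at im_at_r im_at_rI
  refine ⟨ha, Complex.ext ?_ ?_⟩
  · simp only [Complex.conj_re]
    nlinarith
  · simp only [Complex.conj_im]
    nlinarith

theorem Matrix.PosSemidef.nonneg_of_mem_numericalRange {ι : Type*} [Fintype ι] {d : ℕ}
    {T : Matrix (Fin d) (Fin d) ℂ} {A B C : Matrix ι ι ℂ}
    (h : (A ⊗ₖ (1 : Matrix (Fin d) (Fin d) ℂ) + B ⊗ₖ T + C ⊗ₖ Tᴴ).PosSemidef)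
    (y : ι → ℂ) {w : ℂ} (hw : w ∈ numericalRange T) :
    0 ≤ star y ⬝ᵥ (A *ᵥ y) + star y ⬝ᵥ (B *ᵥ y) * w + star y ⬝ᵥ (C *ᵥ y) * conj w := by
  obtain ⟨x, hx, rfl⟩ := hw
  have := h.dotProduct_mulVec_nonneg fun p => y p.1 * x p.2
  rwa [add_mulVec, add_mulVec, dotProduct_add, dotProduct_add,
    star_dotProduct_kronecker_mulVec_prod, star_dotProduct_kronecker_mulVec_prod,
    star_dotProduct_kronecker_mulVec_prod, one_mulVec, hx, mul_one,
    star_dotProduct_conjTranspose_mulVec] at this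

theorem form_of_positive_element {d n : ℕ} (T : Matrix (Fin d) (Fin d) ℂ)
    (hT : (0 : ℂ) ∈ interior (numericalRange T))
    (A B C : Matrix (Fin n) (Fin n) ℂ)
    (h : (A ⊗ₖ (1 : Matrix (Fin d) (Fin d) ℂ) + B ⊗ₖ T + C ⊗ₖ Tᴴ).PosSemidef) :
    A.PosSemidef ∧ C = Bᴴ := by
  have key (y : Fin n → ℂ) :
      0 ≤ star y ⬝ᵥ (A *ᵥ y) ∧ star y ⬝ᵥ (C *ᵥ y) = conj (star y ⬝ᵥ (B *ᵥ y)) :=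
    Complex.nonneg_and_eq_conj_of_eventually_nonneg <|
      eventually_of_mem (mem_interior_iff_mem_nhds.mp hT) fun _ hw =>
        h.nonneg_of_mem_numericalRange y hw
  refine ⟨posSemidef_of_forall_nonneg fun y => (key y).1,
    ext_star_dotProduct_mulVec fun y => ?_⟩
  rw [star_dotProduct_conjTranspose_mulVec, (key y).2, Complex.star_def]
end

section
/- Let T be a d×d complex matrix with 0 in the interior of the numerical range W(T), let X be an m×m complex matrix, and fix n ∈ ℕ. Then the following are equivalent: (1) for all n×n complex matrices A and B with A positive semidefinite, if A ⊗ I_d + B ⊗ T + Bᴴ ⊗ Tᴴ is positive semidefinite then A ⊗ I_m + B ⊗ X + Bᴴ ⊗ Xᴴ is positive semidefinite; (2) for all n×n complex matrices B, if I_n ⊗ I_d + B ⊗ T + Bᴴ ⊗ Tᴴ is positive semidefinite then I_n ⊗ I_m + B ⊗ X + Bᴴ ⊗ Xᴴ is positive semidefinite. -/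
/-!
A positive definite `A` is `Cᴴ * C` with `C` invertible, and congruence by `C⁻¹ ⊗ 1` turns
`A ⊗ 1 + B ⊗ T + Bᴴ ⊗ Tᴴ` into the unital `1 ⊗ 1 + B' ⊗ T + B'ᴴ ⊗ Tᴴ` with `B' = C⁻ᴴ * B * C⁻¹`,
for `T` and `X` alike. Congruence preserves positive semidefiniteness, so the unital case gives
the positive definite one. A singular `A` is the limit of `A + ε • 1`, and the positive
semidefinite matrices form a closed set.
-/

open Matrix Kronecker
open scoped ComplexOrder

open Filter Topology

namespace Matrix

section kroneckerPencil

variable {R : Type*} [CommRing R] [StarRing R] {ι ι' κ : Type*} [DecidableEq κ]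

def kroneckerPencil (A B : Matrix ι ι R) (T : Matrix κ κ R) : Matrix (ι × κ) (ι × κ) R :=
  A ⊗ₖ 1 + B ⊗ₖ T + Bᴴ ⊗ₖ Tᴴ

theorem kroneckerPencil_add_smul_one [DecidableEq ι] (A B : Matrix ι ι R) (T : Matrix κ κ R)
    (c : R) : kroneckerPencil (A + c • 1) B T = kroneckerPencil A B T + c • 1 := by
  rw [kroneckerPencil, kroneckerPencil, add_kronecker, smul_kronecker, one_kronecker_one]
  abel

theorem kroneckerPencil_conj [Fintype ι] [Fintype κ] (C : Matrix ι ι' R) (A B : Matrix ι ι R)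
    (T : Matrix κ κ R) :
    -- without the ascription the product elaborates through `CStarMatrix`'s multiplication
    (C ⊗ₖ (1 : Matrix κ κ R))ᴴ * kroneckerPencil A B T
        * (C ⊗ₖ 1 : Matrix (ι × κ) (ι' × κ) R) =
      kroneckerPencil (Cᴴ * A * C) (Cᴴ * B * C) T := by
  simp only [kroneckerPencil, conjTranspose_kronecker, conjTranspose_one, Matrix.add_mul,
    Matrix.mul_add, ← mul_kronecker_mul, Matrix.one_mul, Matrix.mul_one, conjTranspose_mul,
    conjTranspose_conjTranspose, Matrix.mul_assoc]

end kroneckerPencil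

variable {𝕜 : Type*} [RCLike 𝕜] {ι : Type*} [Fintype ι] [DecidableEq ι]

theorem posSemidef_of_forall_posSemidef_add_smul_one {M : Matrix ι ι 𝕜}
    (h : ∀ ε : ℝ, 0 < ε → (M + (ε : 𝕜) • (1 : Matrix ι ι 𝕜)).PosSemidef) : M.PosSemidef := by
  refine .of_dotProduct_mulVec_nonneg ?_ fun x => ?_
  · simpa using (h 1 one_pos).isHermitian.sub isHermitian_one
  · have hlim : Tendsto (fun ε : ℝ => star x ⬝ᵥ ((M + (ε : 𝕜) • (1 : Matrix ι ι 𝕜)) *ᵥ x))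
        (𝓝[>] 0) (𝓝 (star x ⬝ᵥ (M *ᵥ x))) := by
      simp only [add_mulVec, smul_mulVec, one_mulVec, dotProduct_add, dotProduct_smul]
      exact tendsto_nhdsWithin_of_tendsto_nhds (Continuous.tendsto' (by fun_prop) 0 _ (by simp))
    exact ge_of_tendsto hlim (eventually_nhdsWithin_of_forall fun ε hε =>
      (h ε hε).dotProduct_mulVec_nonneg x)

theorem PosDef.exists_isUnit_eq_conjTranspose_mul_self {A : Matrix ι ι 𝕜} (hA : A.PosDef) :
    ∃ C : Matrix ι ι 𝕜, IsUnit C ∧ A = Cᴴ * C := by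
  open scoped MatrixOrder in
  obtain ⟨C, hC, rfl⟩ :=
    CStarAlgebra.isStrictlyPositive_iff_eq_star_mul_self.mp hA.isStrictlyPositive
  exact ⟨C, hC, rfl⟩

variable {κ μ : Type*} [Fintype κ] [DecidableEq κ] [Fintype μ] [DecidableEq μ]
  {T : Matrix κ κ 𝕜} {X : Matrix μ μ 𝕜} {A B : Matrix ι ι 𝕜}

theorem posSemidef_kroneckerPencil_of_posDef
    (hunital : ∀ B : Matrix ι ι 𝕜, (kroneckerPencil 1 B T).PosSemidef →
      (kroneckerPencil 1 B X).PosSemidef)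
    (hA : A.PosDef) (hT : (kroneckerPencil A B T).PosSemidef) :
    (kroneckerPencil A B X).PosSemidef := by
  obtain ⟨C, hC, rfl⟩ := hA.exists_isUnit_eq_conjTranspose_mul_self
  have hdet := (isUnit_iff_isUnit_det C).mp hC
  set B' := C⁻¹ᴴ * B * C⁻¹
  have hA' : C⁻¹ᴴ * (Cᴴ * C) * C⁻¹ = 1 := by
    rw [← Matrix.mul_assoc, ← conjTranspose_mul, mul_nonsing_inv C hdet, conjTranspose_one,
      Matrix.one_mul, mul_nonsing_inv C hdet]
  have hB' : Cᴴ * B' * C = B := by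
    simp only [B', ← Matrix.mul_assoc, ← conjTranspose_mul, nonsing_inv_mul C hdet,
      conjTranspose_one, Matrix.one_mul]
    rw [Matrix.mul_assoc, nonsing_inv_mul C hdet, Matrix.mul_one]
  have hT' : (kroneckerPencil 1 B' T).PosSemidef := by
    simpa only [kroneckerPencil_conj, hA'] using
      hT.conjTranspose_mul_mul_same (C⁻¹ ⊗ₖ (1 : Matrix κ κ 𝕜))
  simpa only [kroneckerPencil_conj, Matrix.mul_one, hB'] using
    (hunital B' hT').conjTranspose_mul_mul_same (C ⊗ₖ (1 : Matrix μ μ 𝕜))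

theorem posSemidef_kroneckerPencil_of_posSemidef
    (hunital : ∀ B : Matrix ι ι 𝕜, (kroneckerPencil 1 B T).PosSemidef →
      (kroneckerPencil 1 B X).PosSemidef)
    (hA : A.PosSemidef) (hT : (kroneckerPencil A B T).PosSemidef) :
    (kroneckerPencil A B X).PosSemidef := by
  refine posSemidef_of_forall_posSemidef_add_smul_one fun ε hε => ?_
  have hε' : (0 : 𝕜) < ε := RCLike.ofReal_pos.mpr hε
  have hAε : (A + (ε : 𝕜) • 1).PosDef := PosDef.posSemidef_add hA (PosDef.one.smul hε')
  have hTε : (kroneckerPencil (A + (ε : 𝕜) • 1) B T).PosSemidef := by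
    rw [kroneckerPencil_add_smul_one]
    exact hT.add (PosSemidef.one.smul hε'.le)
  rw [← kroneckerPencil_add_smul_one]
  exact posSemidef_kroneckerPencil_of_posDef hunital hAε hTε

end Matrix

theorem nPositivity_iff_general {d m n : ℕ} (T : Matrix (Fin d) (Fin d) ℂ)
    (X : Matrix (Fin m) (Fin m) ℂ) :
    (∀ A B : Matrix (Fin n) (Fin n) ℂ, A.PosSemidef →
        (A ⊗ₖ (1 : Matrix (Fin d) (Fin d) ℂ) + B ⊗ₖ T + Bᴴ ⊗ₖ Tᴴ).PosSemidef →
        (A ⊗ₖ (1 : Matrix (Fin m) (Fin m) ℂ) + B ⊗ₖ X + Bᴴ ⊗ₖ Xᴴ).PosSemidef) ↔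
      (∀ B : Matrix (Fin n) (Fin n) ℂ,
        ((1 : Matrix (Fin n) (Fin n) ℂ) ⊗ₖ (1 : Matrix (Fin d) (Fin d) ℂ)
            + B ⊗ₖ T + Bᴴ ⊗ₖ Tᴴ).PosSemidef →
        ((1 : Matrix (Fin n) (Fin n) ℂ) ⊗ₖ (1 : Matrix (Fin m) (Fin m) ℂ)
            + B ⊗ₖ X + Bᴴ ⊗ₖ Xᴴ).PosSemidef) :=
  ⟨fun h B => h 1 B .one, fun h _ _ => posSemidef_kroneckerPencil_of_posSemidef h⟩

theorem nPositivity_iff {d m n : ℕ} (T : Matrix (Fin d) (Fin d) ℂ)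
    (hT : (0 : ℂ) ∈ interior (numericalRange T))
    (X : Matrix (Fin m) (Fin m) ℂ) :
    (∀ A B : Matrix (Fin n) (Fin n) ℂ, A.PosSemidef →
        (A ⊗ₖ (1 : Matrix (Fin d) (Fin d) ℂ) + B ⊗ₖ T + Bᴴ ⊗ₖ Tᴴ).PosSemidef →
        (A ⊗ₖ (1 : Matrix (Fin m) (Fin m) ℂ) + B ⊗ₖ X + Bᴴ ⊗ₖ Xᴴ).PosSemidef) ↔
      (∀ B : Matrix (Fin n) (Fin n) ℂ,
        ((1 : Matrix (Fin n) (Fin n) ℂ) ⊗ₖ (1 : Matrix (Fin d) (Fin d) ℂ)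
            + B ⊗ₖ T + Bᴴ ⊗ₖ Tᴴ).PosSemidef →
        ((1 : Matrix (Fin n) (Fin n) ℂ) ⊗ₖ (1 : Matrix (Fin m) (Fin m) ℂ)
            + B ⊗ₖ X + Bᴴ ⊗ₖ Xᴴ).PosSemidef) :=
  nPositivity_iff_general T X
end

section
/- Let X be an m×m complex matrix such that for every λ ∈ ℂ with |λ| = 1 the matrix I_m + λ·X + conj(λ)·Xᴴ is positive semidefinite. Then for every n ∈ ℕ and every n×n complex matrix B with operator norm ‖B‖ ≤ 1, the matrix I_n ⊗ I_m + B ⊗ X + Bᴴ ⊗ Xᴴ is positive semidefinite. -/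
open Matrix Kronecker
open scoped ComplexOrder

/-- The operator norm (spectral norm) of a square complex matrix, i.e. the norm of the
induced continuous linear endomorphism of Euclidean space. -/
noncomputable def opNorm {k : ℕ} (A : Matrix (Fin k) (Fin k) ℂ) : ℝ :=
  ‖Matrix.toEuclideanCLM (𝕜 := ℂ) A‖

/-!
A contraction `B` is the top-left corner of a unitary `U` (extend the isometry `[B; S]`,
`SᴴS = 1 - BᴴB`, to a unitary), and the matrix in question is the corresponding compression of
`1 + Wᴴ Y + Yᴴ W` with `W = Uᴴ ⊗ 1` unitary and `Y = 1 ⊗ X`, `Yᴴ` both commuting with `W`.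
For such `W` and `Y`, average `Pᴴ (1 + z Y + z̄ Yᴴ) P`, with `P = ∑_{k ≤ K} zᵏ Wᵏ`, over the
`(K + 2)`-nd roots of unity `z`: orthogonality of characters leaves
`(K + 2) (1 + K (1 + Wᴴ Y + Yᴴ W))`, and positivity of this for every `K` forces
`1 + Wᴴ Y + Yᴴ W ≥ 0`.
-/

open Finset
open scoped InnerProductSpace Matrix.Norms.L2Operator MatrixOrder

theorem IsPrimitiveRoot.sum_star_pow_mul_pow {ζ : ℂ} {N : ℕ} (hζ : IsPrimitiveRoot ζ N)
    {a b : ℕ} (ha : a < N) (hb : b < N) :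
    ∑ t ∈ range N, star (ζ ^ t) ^ a * (ζ ^ t) ^ b = if a = b then (N : ℂ) else 0 := by
  have hunit : star ζ * ζ = 1 := by
    rw [Complex.star_def, mul_comm, Complex.mul_conj, Complex.normSq_eq_norm_sq,
      hζ.norm'_eq_one (by omega)]
    norm_num
  set c := star ζ ^ a * ζ ^ b with hc_def
  have hsummand : ∀ t, star (ζ ^ t) ^ a * (ζ ^ t) ^ b = c ^ t := fun t => by
    rw [star_pow, ← pow_mul, ← pow_mul, mul_comm t a, mul_comm t b, pow_mul, pow_mul, mul_pow]
  simp only [hsummand]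
  have hc : c * ζ ^ a = ζ ^ b := by
    rw [mul_right_comm, ← mul_pow, hunit, one_pow, one_mul]
  split_ifs with hab
  · subst hab
    have hc_one : c = 1 := by rw [hc_def, ← mul_pow, hunit, one_pow]
    simp [hc_one]
  · have hc_ne_one : c ≠ 1 := fun h => hab (hζ.pow_inj ha hb (by simpa [h] using hc))
    have hcN : c ^ N = 1 := by
      rw [mul_pow, ← pow_mul, ← pow_mul, mul_comm a, mul_comm b, pow_mul, pow_mul, ← star_pow,
        hζ.pow_eq_one, star_one, one_pow, one_pow, one_mul]
    rw [geom_sum_eq hc_ne_one, hcN, sub_self, zero_div]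

section FejerAveraging

variable {A : Type*} [Ring A] [StarRing A] [Algebra ℂ A] [StarModule ℂ A]

theorem star_sum_pow_smul_mul_mul_sum (W Y : A) (z : ℂ) (K : ℕ) :
    star (∑ k ∈ range K, z ^ k • W ^ k) * (1 + z • Y + star z • star Y) *
        ∑ j ∈ range K, z ^ j • W ^ j =
      ∑ j ∈ range K, ∑ k ∈ range K,
        ((star z ^ k * z ^ j) • (star W ^ k * W ^ j) +
          (star z ^ k * z ^ (j + 1)) • (star W ^ k * Y * W ^ j) +
          (star z ^ (k + 1) * z ^ j) • (star W ^ k * star Y * W ^ j)) := by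
  simp only [star_sum, star_smul, star_pow, sum_mul, mul_sum]
  refine sum_congr rfl fun j _ => sum_congr rfl fun k _ => ?_
  simp only [mul_add, add_mul, mul_one, smul_mul_assoc, mul_smul_comm, smul_smul, smul_add]
  match_scalars <;> ring

theorem IsPrimitiveRoot.sum_star_sum_pow_smul_mul_mul_sum {ζ : ℂ} {K : ℕ}
    (hζ : IsPrimitiveRoot ζ (K + 2)) {W Y : A} (hW : W ∈ unitary A) (hWY : Commute W Y)
    (hWY' : Commute W (star Y)) :
    ∑ t ∈ range (K + 2), star (∑ k ∈ range (K + 1), (ζ ^ t) ^ k • W ^ k) *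
        (1 + ζ ^ t • Y + star (ζ ^ t) • star Y) * ∑ j ∈ range (K + 1), (ζ ^ t) ^ j • W ^ j =
      ((K + 2 : ℕ) : ℂ) • (1 + K • (1 + star W * Y + star Y * W)) := by
  have hpow (k : ℕ) : star W ^ k * W ^ k = 1 := by
    rw [← star_pow]; exact Unitary.star_mul_self_of_mem (pow_mem hW k)
  have hshift (k : ℕ) : star W ^ (k + 1) * Y * W ^ k = star W * Y := by
    rw [pow_succ', mul_assoc, mul_assoc, ← (hWY.pow_left k).eq, ← mul_assoc (star W ^ k),
      hpow, one_mul]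
  have hshift' (k : ℕ) : star W ^ k * star Y * W ^ (k + 1) = star Y * W := by
    rw [pow_succ, ← mul_assoc, mul_assoc _ (star Y), ← (hWY'.pow_left k).eq, ← mul_assoc,
      hpow, one_mul]
  set N : ℂ := ((K + 2 : ℕ) : ℂ)
  have hcount (M : A) : ∑ x ∈ range (K + 1), (if x + 1 < K + 1 then M else 0) = K • M := by
    rw [sum_range_succ, if_neg (lt_irrefl _), add_zero,
      sum_congr rfl fun x hx => if_pos (by simpa using hx), sum_const, card_range]
  calc _ = ∑ j ∈ range (K + 1), ∑ k ∈ range (K + 1),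
        ((if k = j then N else 0) • (star W ^ k * W ^ j) +
          (if k = j + 1 then N else 0) • (star W ^ k * Y * W ^ j) +
          (if k + 1 = j then N else 0) • (star W ^ k * star Y * W ^ j)) := by
        simp only [star_sum_pow_smul_mul_mul_sum]
        rw [sum_comm]
        refine sum_congr rfl fun j hj => ?_
        rw [sum_comm]
        refine sum_congr rfl fun k hk => ?_
        rw [mem_range] at hj hk
        simp only [sum_add_distrib, ← sum_smul]
        rw [hζ.sum_star_pow_mul_pow (by omega) (by omega),
          hζ.sum_star_pow_mul_pow (by omega) (by omega),
          hζ.sum_star_pow_mul_pow (by omega) (by omega)]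
    _ = _ := by
        simp only [sum_add_distrib, ite_smul, zero_smul, sum_ite_eq', mem_range]
        rw [sum_comm (f := fun j k => if k + 1 = j then _ else _)]
        simp only [sum_ite_eq, mem_range]
        rw [sum_ite_of_true fun x hx => mem_range.mp hx]
        simp only [hpow, hshift, hshift', hcount, sum_const, card_range]
        module

end FejerAveraging

theorem Complex.nonneg_of_forall_nonneg_add_nsmul {a b : ℂ} (h : ∀ K : ℕ, 0 ≤ a + K • b) :
    0 ≤ b := by
  simp only [Complex.le_def, Complex.zero_re, Complex.zero_im, Complex.add_re, Complex.add_im,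
    nsmul_eq_mul, Complex.mul_re, Complex.mul_im, Complex.natCast_re, Complex.natCast_im, zero_mul,
    sub_zero, add_zero] at h ⊢
  have him : b.im = 0 := by
    have h0 := (h 0).2
    have h1 := (h 1).2
    norm_num at h0 h1
    linarith
  refine ⟨?_, him.symm⟩
  by_contra! hre
  obtain ⟨K, hK⟩ := exists_nat_gt (a.re / -b.re)
  rw [div_lt_iff₀ (by linarith)] at hK
  linarith [(h K).1]

theorem Matrix.PosSemidef.of_forall_one_add_nsmul {ι : Type*} [Fintype ι] [DecidableEq ι]
    {T : Matrix ι ι ℂ} (h : ∀ K : ℕ, (1 + K • T).PosSemidef) : T.PosSemidef := by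
  refine .of_dotProduct_mulVec_nonneg ?_ fun x => ?_
  · simpa using (h 1).isHermitian.sub isHermitian_one
  · refine Complex.nonneg_of_forall_nonneg_add_nsmul (a := star x ⬝ᵥ x) fun K => ?_
    simpa only [add_mulVec, one_mulVec, smul_mulVec, dotProduct_add, dotProduct_smul] using
      (h K).dotProduct_mulVec_nonneg x

theorem Matrix.posSemidef_one_sub_conjTranspose_mul_self_of_norm_le_one {ι : Type*} [Fintype ι]
    [DecidableEq ι] {B : Matrix ι ι ℂ} (hB : ‖B‖ ≤ 1) : (1 - Bᴴ * B).PosSemidef := by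
  refine (sub_nonneg.mpr ?_).posSemidef
  calc Bᴴ * B ≤ algebraMap ℝ _ (‖B‖ ^ 2) := CStarAlgebra.star_mul_le_algebraMap_norm_sq
    _ ≤ algebraMap ℝ _ 1 := by
        gcongr
        exact pow_le_one₀ (norm_nonneg _) hB
    _ = 1 := map_one _

theorem Matrix.exists_mem_unitaryGroup_apply_inl_eq {ι κ : Type*} [Fintype ι] [Fintype κ]
    [DecidableEq ι] [DecidableEq κ] {V : Matrix (ι ⊕ κ) ι ℂ} (hV : Vᴴ * V = 1) :
    ∃ U ∈ unitaryGroup (ι ⊕ κ) ℂ, ∀ i j, U i (Sum.inl j) = V i j := by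
  let v : ι ⊕ κ → EuclideanSpace ℂ (ι ⊕ κ) := Sum.elim (fun j => WithLp.toLp 2 (Vᵀ j)) 0
  have hv : Orthonormal ℂ ((Set.range Sum.inl).domRestrict v) := by
    rw [orthonormal_iff_ite]
    rintro ⟨_, i, rfl⟩ ⟨_, j, rfl⟩
    have hinner : ⟪v (Sum.inl i), v (Sum.inl j)⟫_ℂ = (Vᴴ * V) i j := by
      simp [v, EuclideanSpace.inner_toLp_toLp, dotProduct, mul_apply, mul_comm]
    simpa [hV, one_apply, Subtype.ext_iff] using hinner
  obtain ⟨b, hb⟩ := hv.exists_orthonormalBasis_extension_of_card_eq (by simp)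
  refine ⟨(EuclideanSpace.basisFun _ ℂ).toBasis.toMatrix b,
    (EuclideanSpace.basisFun _ ℂ).toMatrix_orthonormalBasis_mem_unitary b, fun i j => ?_⟩
  rw [Module.Basis.toMatrix_apply]
  simp [hb _ ⟨j, rfl⟩, v]

theorem Matrix.exists_mem_unitaryGroup_apply_inl_inl_eq {ι : Type*} [Fintype ι] [DecidableEq ι]
    {B : Matrix ι ι ℂ} (hB : (1 - Bᴴ * B).PosSemidef) :
    ∃ U ∈ unitaryGroup (ι ⊕ ι) ℂ, ∀ i j, U (Sum.inl i) (Sum.inl j) = B i j := by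
  obtain ⟨S, hS⟩ := CStarAlgebra.nonneg_iff_eq_star_mul_self.mp hB.nonneg
  obtain ⟨U, hU, hUV⟩ := exists_mem_unitaryGroup_apply_inl_eq (V := fromRows B S) (by
    rw [conjTranspose_fromRows_eq_fromCols_conjTranspose, fromCols_mul_fromRows,
      ← star_eq_conjTranspose S, ← hS, add_sub_cancel])
  exact ⟨U, hU, fun i j => hUV _ _⟩

theorem Matrix.posSemidef_one_add_conjTranspose_mul_add_of_mem_unitary {ι : Type*} [Fintype ι]
    [DecidableEq ι] {W Y : Matrix ι ι ℂ} (hW : W ∈ unitary (Matrix ι ι ℂ)) (hWY : Commute W Y)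
    (hWY' : Commute W Yᴴ) (hY : ∀ z : ℂ, ‖z‖ = 1 → (1 + z • Y + star z • Yᴴ).PosSemidef) :
    (1 + Wᴴ * Y + Yᴴ * W).PosSemidef := by
  refine .of_forall_one_add_nsmul fun K => ?_
  have hζ := Complex.isPrimitiveRoot_exp (K + 2) (by omega)
  have hsum := hζ.sum_star_sum_pow_smul_mul_mul_sum hW hWY hWY'
  have hpos : (((K + 2 : ℕ) : ℂ) • (1 + K • (1 + star W * Y + star Y * W))).PosSemidef := by
    rw [← hsum]
    refine posSemidef_sum _ fun t _ => (hY _ ?_).conjTranspose_mul_mul_same _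
    rw [norm_pow, hζ.norm'_eq_one (by omega), one_pow]
  rw [← inv_smul_smul₀ (Nat.cast_ne_zero.mpr (by omega) : ((K + 2 : ℕ) : ℂ) ≠ 0)
    (1 + K • (1 + Wᴴ * Y + Yᴴ * W))]
  exact hpos.smul (inv_nonneg.mpr (Nat.cast_nonneg _))

theorem arveson_J2 {m : ℕ} (X : Matrix (Fin m) (Fin m) ℂ)
    (hX : ∀ lam : ℂ, ‖lam‖ = 1 →
      ((1 : Matrix (Fin m) (Fin m) ℂ) + lam • X + (starRingEnd ℂ lam) • Xᴴ).PosSemidef) :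
    ∀ n : ℕ, ∀ B : Matrix (Fin n) (Fin n) ℂ, opNorm B ≤ 1 →
      ((1 : Matrix (Fin n) (Fin n) ℂ) ⊗ₖ (1 : Matrix (Fin m) (Fin m) ℂ)
          + B ⊗ₖ X + Bᴴ ⊗ₖ Xᴴ).PosSemidef := by
  intro n B hB
  have hB' : ‖B‖ ≤ 1 := by rwa [cstar_norm_def]
  obtain ⟨U, hU, hUB⟩ := exists_mem_unitaryGroup_apply_inl_inl_eq
    (posSemidef_one_sub_conjTranspose_mul_self_of_norm_le_one hB')
  have hW : Uᴴ ⊗ₖ (1 : Matrix (Fin m) (Fin m) ℂ) ∈ unitary _ :=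
    kronecker_mem_unitary (Unitary.star_mem hU) (one_mem _)
  have hcomm (Z : Matrix (Fin m) (Fin m) ℂ) :
      Commute (Uᴴ ⊗ₖ (1 : Matrix (Fin m) (Fin m) ℂ)) (1 ⊗ₖ Z) := by
    simp [Commute, SemiconjBy, ← mul_kronecker_mul]
  have hY (z : ℂ) (hz : ‖z‖ = 1) : (1 + z • ((1 : Matrix (Fin n ⊕ Fin n) _ ℂ) ⊗ₖ X) +
      star z • (1 ⊗ₖ X)ᴴ).PosSemidef := by
    simpa [conjTranspose_kronecker, kronecker_add, kronecker_smul, one_kronecker_one] using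
      PosSemidef.one.kronecker (hX z hz)
  have hdil := posSemidef_one_add_conjTranspose_mul_add_of_mem_unitary hW (hcomm X)
    (by simpa [conjTranspose_kronecker] using hcomm Xᴴ) hY
  convert hdil.submatrix (fun p : Fin n × Fin m => (Sum.inl p.1, p.2)) using 1
  ext ⟨i, a⟩ ⟨j, b⟩
  simp [conjTranspose_kronecker, ← mul_kronecker_mul, hUB, one_apply]
end

section
/- Let B be an n×n complex matrix satisfying B·Bᴴ + Bᴴ·B = I_n. Let |B| denote the positive semidefinite square root of Bᴴ·B and |Bᴴ| the positive semidefinite square root of B·Bᴴ. Then there exist a unitary n×n matrix V and a function λ : Fin n → ℝ with 0 ≤ λ(j) ≤ 1 for all j, such that Vᴴ·|B|·V is the diagonal matrix with entries λ(j) and Vᴴ·|Bᴴ|·V is the diagonal matrix with entries √(1 − λ(j)²). -/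
open Matrix
open scoped ComplexOrder

/-- The square root of a positive semidefinite matrix, as defined in Mathlib (Dec 2024). -/
noncomputable def Matrix.PosSemidef.sqrt {n 𝕜 : Type*} [Fintype n] [DecidableEq n] [RCLike 𝕜]
    {A : Matrix n n 𝕜} (hA : A.PosSemidef) : Matrix n n 𝕜 :=
  hA.1.eigenvectorUnitary.1 * diagonal ((↑) ∘ (√·) ∘ hA.1.eigenvalues) *
    (star hA.1.eigenvectorUnitary : Matrix n n 𝕜)

/-!
Both absolute values are functions of the one Hermitian matrix `Bᴴ * B`: `|B| = √(Bᴴ * B)`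
and, since `B * Bᴴ = 1 - Bᴴ * B`, `|Bᴴ| = √(1 - Bᴴ * B)`. An eigenbasis of `Bᴴ * B` therefore diagonalizes
both, with entries `√α` and `√(1 - α)` at the eigenvalues `α ∈ [0, 1]` of `Bᴴ * B`.
-/

open scoped MatrixOrder

namespace Matrix

variable {n 𝕜 : Type*} [Fintype n] [DecidableEq n] [RCLike 𝕜]

lemma PosSemidef.sqrt_eq_cfcSqrt {A : Matrix n n 𝕜} (hA : A.PosSemidef) :
    hA.sqrt = CFC.sqrt A := by
  rw [CFC.sqrt_eq_real_sqrt A hA.nonneg, cfcₙ_eq_cfc, hA.1.cfc_eq]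
  rfl

lemma IsHermitian.eigenvalues_le_one {A : Matrix n n 𝕜} (hA : A.IsHermitian) (h : A ≤ 1)
    (i : n) : hA.eigenvalues i ≤ 1 :=
  (le_algebraMap_iff_spectrum_le (r := (1 : ℝ)) hA.isSelfAdjoint).mp (by simpa using h) _
    (hA.eigenvalues_mem_spectrum_real i)

lemma IsHermitian.cfcSqrt_one_sub {A : Matrix n n 𝕜} (hA : A.IsHermitian) (h : A ≤ 1) :
    CFC.sqrt (1 - A) = hA.cfc (fun x ↦ √(1 - x)) := by
  have h1 : 1 - A = cfc (fun x : ℝ ↦ 1 - x) A := by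
    rw [cfc_sub .., cfc_const_one .., cfc_id' ..]
  rw [CFC.sqrt_eq_real_sqrt _ (sub_nonneg.mpr h), cfcₙ_eq_cfc, ← hA.cfc_eq, h1,
    ← cfc_comp' ..]

end Matrix

theorem simultaneous_diagonalization_of_abs {n : ℕ} (B : Matrix (Fin n) (Fin n) ℂ)
    (hB : B * Bᴴ + Bᴴ * B = 1) :
    ∃ (V : Matrix (Fin n) (Fin n) ℂ) (lam : Fin n → ℝ),
      Vᴴ * V = 1 ∧ V * Vᴴ = 1 ∧
      (∀ j, 0 ≤ lam j ∧ lam j ≤ 1) ∧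
      Vᴴ * (Matrix.posSemidef_conjTranspose_mul_self B).sqrt * V
        = Matrix.diagonal (fun j => ((lam j : ℝ) : ℂ)) ∧
      Vᴴ * (Matrix.posSemidef_self_mul_conjTranspose B).sqrt * V
        = Matrix.diagonal (fun j => ((Real.sqrt (1 - lam j ^ 2) : ℝ) : ℂ)) := by
  have hH := posSemidef_conjTranspose_mul_self B
  have hle : Bᴴ * B ≤ 1 := by
    rw [le_iff, ← hB, add_sub_cancel_right]
    exact posSemidef_self_mul_conjTranspose B
  set U := hH.1.eigenvectorUnitary
  have hT : (posSemidef_self_mul_conjTranspose B).sqrt = hH.1.cfc (fun x ↦ √(1 - x)) := by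
    rw [PosSemidef.sqrt_eq_cfcSqrt, ← hH.1.cfcSqrt_one_sub hle, ← hB, add_sub_cancel_right]
  -- `Vᴴ * X * V` is `(conjStarAlgAut U).symm X`, and `PosSemidef.sqrt` is conjugation by `U`.
  refine ⟨U, fun j ↦ √(hH.1.eigenvalues j), U.2.1, U.2.2,
    fun j ↦ ⟨Real.sqrt_nonneg _, Real.sqrt_le_one.mpr (hH.1.eigenvalues_le_one hle j)⟩,
    (Unitary.conjStarAlgAut ℂ _ U).symm_apply_apply _, ?_⟩
  rw [hT]
  refine ((Unitary.conjStarAlgAut ℂ _ U).symm_apply_apply _).trans ?_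
  congr 1
  ext j
  simp [Real.sq_sqrt (hH.eigenvalues_nonneg j)]
end

section
/- Let H be a complex Hilbert space and B : H → H a bounded linear operator satisfying B∘B* + B*∘B = id. Then there exists a unitary operator U on H such that B = U ∘ |B|, where |B| denotes the positive square root of B*∘B. -/
/-!
Write `P = |B|`, so that `‖P x‖ = ‖B x‖`. On `ker B` the hypothesis reads `B B* z = z`, so `B*` is
isometric there, and it maps `ker B` into `ker B*`, which is orthogonal to `range B`. Hence
`P x + z ↦ B x + B* z` (`z ∈ ker B`) is norm-preserving on `range P + ker B`, a dense subspace
because `(range P)ᗮ = ker P = ker B`. Its continuous extension `U` is an isometry whose range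
contains `range B + ker B*`, which is dense as well: every `y ∈ ker B*` is `B* (B y)` with
`B y ∈ ker B`. An isometry with dense range is onto, so `U` is unitary, and `B = U P`.
-/

open ContinuousLinearMap

open scoped InnerProductSpace

namespace LinearMap

variable {𝕜 E G F : Type*} [NontriviallyNormedField 𝕜] [AddCommGroup E] [Module 𝕜 E]
  [NormedAddCommGroup G] [NormedSpace 𝕜 G] [NormedAddCommGroup F] [NormedSpace 𝕜 F]
  [CompleteSpace F] {f : E →ₗ[𝕜] F} {e : E →ₗ[𝕜] G}

theorem exists_extension_norm_map (h_dense : DenseRange e) (h_norm : ∀ x, ‖f x‖ = ‖e x‖) :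
    ∃ U : G →L[𝕜] F, (∀ y, ‖U y‖ = ‖y‖) ∧ ∀ x, U (e x) = f x := by
  have h_eq := extendOfNorm_eq h_dense ⟨1, fun x ↦ (h_norm x).trans_le (one_mul _).ge⟩
  refine ⟨f.extendOfNorm e, fun y ↦ ?_, h_eq⟩
  refine h_dense.induction (fun _ ⟨x, hx⟩ ↦ ?_) (isClosed_eq (by fun_prop) (by fun_prop)) y
  rw [← hx, h_eq, h_norm]

end LinearMap

theorem ContinuousLinearMap.surjective_of_norm_map_of_denseRange {𝕜 E F : Type*}
    [NontriviallyNormedField 𝕜] [NormedAddCommGroup E] [NormedSpace 𝕜 E] [CompleteSpace E]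
    [NormedAddCommGroup F] [NormedSpace 𝕜 F] {U : E →L[𝕜] F}
    (hU : ∀ x, ‖U x‖ = ‖x‖) (hdense : DenseRange U) : Function.Surjective U := by
  have hclosed : IsClosed (Set.range U) :=
    (AddMonoidHomClass.isometry_of_norm U hU).isClosedEmbedding.isClosed_range
  exact Set.range_eq_univ.mp (hclosed.closure_eq ▸ hdense.closure_range)

section InnerProductSpace

variable {𝕜 E F : Type*} [RCLike 𝕜]
  [NormedAddCommGroup E] [InnerProductSpace 𝕜 E] [CompleteSpace E]
  [NormedAddCommGroup F] [InnerProductSpace 𝕜 F] [CompleteSpace F]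

theorem ContinuousLinearMap.dense_range_adjoint_sup_ker (T : E →L[𝕜] F) :
    Dense (((adjoint T).range ⊔ T.ker : Submodule 𝕜 E) : Set E) := by
  rw [Submodule.dense_iff_topologicalClosure_eq_top, Submodule.topologicalClosure_eq_top_iff,
    ← Submodule.inf_orthogonal, orthogonal_range, adjoint_adjoint]
  exact Submodule.inf_orthogonal_eq_bot _

theorem IsSelfAdjoint.norm_apply_eq_of_comp_self_eq {P : E →L[𝕜] E} {B : E →L[𝕜] F}
    (hP : IsSelfAdjoint P) (hPB : P ∘L P = adjoint B ∘L B) (x : E) : ‖P x‖ = ‖B x‖ := by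
  rw [apply_norm_eq_sqrt_inner_adjoint_left, hP.adjoint_eq, hPB,
    ← apply_norm_eq_sqrt_inner_adjoint_left]

theorem ContinuousLinearMap.comp_adjoint_eq_one_of_surjective {U : E →L[𝕜] F}
    (hU : adjoint U ∘L U = 1) (hsurj : Function.Surjective U) : U ∘L adjoint U = 1 := by
  ext y
  obtain ⟨x, rfl⟩ := hsurj y
  simpa using congr(U ($hU x))

end InnerProductSpace

namespace ContinuousLinearMap

variable {𝕜 H : Type*} [RCLike 𝕜] [NormedAddCommGroup H] [InnerProductSpace 𝕜 H]
  [CompleteSpace H] {B P : H →L[𝕜] H}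

theorem apply_adjoint_apply_add_adjoint_apply_apply (hB : B ∘L adjoint B + adjoint B ∘L B = 1)
    (x : H) : B (adjoint B x) + adjoint B (B x) = x := by
  simpa using congr($hB x)

theorem apply_adjoint_apply_of_apply_eq_zero (hB : B ∘L adjoint B + adjoint B ∘L B = 1) {z : H}
    (hz : B z = 0) : B (adjoint B z) = z := by
  simpa [hz] using apply_adjoint_apply_add_adjoint_apply_apply hB z

theorem adjoint_apply_apply_of_adjoint_apply_eq_zero (hB : B ∘L adjoint B + adjoint B ∘L B = 1)
    {y : H} (hy : adjoint B y = 0) : adjoint B (B y) = y := by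
  simpa [hy] using apply_adjoint_apply_add_adjoint_apply_apply hB y

theorem norm_adjoint_apply_of_apply_eq_zero (hB : B ∘L adjoint B + adjoint B ∘L B = 1) {z : H}
    (hz : B z = 0) : ‖adjoint B z‖ = ‖z‖ := by
  rw [apply_norm_eq_sqrt_inner_adjoint_left, adjoint_adjoint, comp_apply,
    apply_adjoint_apply_of_apply_eq_zero hB hz, norm_eq_sqrt_re_inner (𝕜 := 𝕜)]

theorem adjoint_apply_adjoint_apply_of_apply_eq_zero (hB : B ∘L adjoint B + adjoint B ∘L B = 1)
    {z : H} (hz : B z = 0) : adjoint B (adjoint B z) = 0 := by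
  have hker : B (adjoint B (adjoint B z)) = 0 := by
    simpa [apply_adjoint_apply_of_apply_eq_zero hB hz] using
      apply_adjoint_apply_add_adjoint_apply_apply hB (adjoint B z)
  rw [← inner_self_eq_zero (𝕜 := 𝕜), adjoint_inner_left, hker, inner_zero_right]

theorem norm_apply_add_adjoint_apply (hB : B ∘L adjoint B + adjoint B ∘L B = 1)
    (hP : IsSelfAdjoint P) (hPB : P ∘L P = adjoint B ∘L B) (x : H) {z : H} (hz : B z = 0) :
    ‖B x + adjoint B z‖ = ‖P x + z‖ := by
  have hPz : P z = 0 := by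
    rw [← norm_eq_zero, hP.norm_apply_eq_of_comp_self_eq hPB, hz, norm_zero]
  have hBx : ⟪B x, adjoint B z⟫_𝕜 = 0 := by
    rw [← adjoint_inner_right, adjoint_apply_adjoint_apply_of_apply_eq_zero hB hz,
      inner_zero_right]
  have hPx : ⟪P x, z⟫_𝕜 = 0 := by
    rw [← hP.adjoint_eq, adjoint_inner_left, hPz, inner_zero_right]
  rw [← mul_self_inj (norm_nonneg _) (norm_nonneg _),
    norm_add_sq_eq_norm_sq_add_norm_sq_of_inner_eq_zero _ _ hBx,
    norm_add_sq_eq_norm_sq_add_norm_sq_of_inner_eq_zero _ _ hPx,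
    norm_adjoint_apply_of_apply_eq_zero hB hz, hP.norm_apply_eq_of_comp_self_eq hPB]

theorem denseRange_coprod_subtype_ker (hP : IsSelfAdjoint P) (hPB : P ∘L P = adjoint B ∘L B) :
    DenseRange ((P : H →ₗ[𝕜] H).coprod B.ker.subtype) := by
  have hker : P.ker = B.ker := by
    ext z
    rw [LinearMap.mem_ker, LinearMap.mem_ker, coe_coe, coe_coe, ← norm_eq_zero,
      hP.norm_apply_eq_of_comp_self_eq hPB, norm_eq_zero]
  rw [DenseRange, ← LinearMap.coe_range, LinearMap.range_coprod, Submodule.range_subtype, ← hker]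
  simpa only [hP.adjoint_eq] using dense_range_adjoint_sup_ker P

theorem denseRange_coprod_adjoint_comp_subtype_ker (hB : B ∘L adjoint B + adjoint B ∘L B = 1) :
    DenseRange ((B : H →ₗ[𝕜] H).coprod ((adjoint B : H →ₗ[𝕜] H) ∘ₗ B.ker.subtype)) := by
  have hB' : adjoint B ∘L adjoint (adjoint B) + adjoint (adjoint B) ∘L adjoint B = 1 := by
    rwa [adjoint_adjoint, add_comm]
  refine (dense_range_adjoint_sup_ker (adjoint B)).mono ?_
  rw [← LinearMap.coe_range, LinearMap.range_coprod, adjoint_adjoint]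
  refine SetLike.coe_subset_coe.mpr (sup_le_sup_left (fun y hy ↦ ⟨⟨B y, ?_⟩, ?_⟩) _)
  · simpa using adjoint_apply_adjoint_apply_of_apply_eq_zero hB' hy
  · exact adjoint_apply_apply_of_adjoint_apply_eq_zero hB hy

theorem exists_unitary_comp_eq (hB : B ∘L adjoint B + adjoint B ∘L B = 1) (hP : IsSelfAdjoint P)
    (hPB : P ∘L P = adjoint B ∘L B) :
    ∃ U : H →L[𝕜] H, adjoint U ∘L U = 1 ∧ U ∘L adjoint U = 1 ∧ B = U ∘L P := by
  obtain ⟨U, hU, hUP⟩ := LinearMap.exists_extension_norm_map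
    (f := (B : H →ₗ[𝕜] H).coprod ((adjoint B : H →ₗ[𝕜] H) ∘ₗ B.ker.subtype))
    (denseRange_coprod_subtype_ker hP hPB) fun w ↦ norm_apply_add_adjoint_apply hB hP hPB w.1 w.2.2
  have hUU : adjoint U ∘L U = 1 := (norm_map_iff_adjoint_comp_self U).mp hU
  have hsurj : Function.Surjective U := by
    refine surjective_of_norm_map_of_denseRange hU
      ((denseRange_coprod_adjoint_comp_subtype_ker hB).mono ?_)
    rintro _ ⟨w, rfl⟩
    exact ⟨_, hUP w⟩
  refine ⟨U, hUU, comp_adjoint_eq_one_of_surjective hUU hsurj, ext fun x ↦ ?_⟩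
  simpa using (hUP (x, 0)).symm

end ContinuousLinearMap

theorem polar_decomposition_unitary {H : Type*} [NormedAddCommGroup H]
    [InnerProductSpace ℂ H] [CompleteSpace H] (B : H →L[ℂ] H)
    (hB : B ∘L ContinuousLinearMap.adjoint B + ContinuousLinearMap.adjoint B ∘L B = 1) :
    ∃ U P : H →L[ℂ] H,
      ContinuousLinearMap.adjoint U ∘L U = 1 ∧
      U ∘L ContinuousLinearMap.adjoint U = 1 ∧
      P.IsPositive ∧
      P ∘L P = ContinuousLinearMap.adjoint B ∘L B ∧
      B = U ∘L P := by
  have hP : (CFC.abs B).IsPositive := (nonneg_iff_isPositive _).mp (CFC.abs_nonneg B)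
  have hPB : CFC.abs B ∘L CFC.abs B = adjoint B ∘L B := CFC.abs_mul_abs B
  obtain ⟨U, hUU, hUU', hBU⟩ := exists_unitary_comp_eq hB hP.isSelfAdjoint hPB
  exact ⟨U, CFC.abs B, hUU, hUU', hP, hPB, hBU⟩
end

section
/- Let B be a 2×2 complex matrix such that I_2 − (B·Bᴴ + Bᴴ·B) is positive semidefinite. Then there exists a 6×6 complex matrix B̃ such that B̃(i,j) = B(i,j) for all i, j ∈ Fin 2 (i.e., B is the top-left 2×2 corner of B̃, so B̃ is a dilation of B) and B̃·B̃ᴴ + B̃ᴴ·B̃ = I_6. -/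
open Matrix
open scoped ComplexOrder

/-!
Multiplying `B` by a unimodular scalar changes neither `B Bᴴ + Bᴴ B` nor the conclusion, so we may
assume that `tr B` is real. Then `B = a + C` with `a` real and `tr C = 0`, and for a traceless
`2 × 2` matrix `C Cᴴ + Cᴴ C` is scalar; hence `B + Bᴴ` and `B Bᴴ + Bᴴ B` are both polynomials in
`C + Cᴴ` and commute. So `B + Bᴴ` commutes with `X = √((1 - (B Bᴴ + Bᴴ B)) / 2)`, which is exactly
what makes `[[B, X], [X, -B]]` a `4 × 4` dilation. Adding the block `[[0, 1], [0, 0]]` pads it to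
size `6`.
-/

namespace Matrix

def starAnticomm {n α : Type*} [Fintype n] [Semiring α] [StarRing α] (M : Matrix n n α) :
    Matrix n n α :=
  M * Mᴴ + Mᴴ * M

variable {m n α : Type*} [Fintype m] [Fintype n]

theorem starAnticomm_smul_of_star_mul_self [CommSemiring α] [StarRing α] {u : α}
    (hu : star u * u = 1) (M : Matrix n n α) : starAnticomm (u • M) = starAnticomm M := by
  have hu' : u * star u = 1 := by rw [mul_comm, hu]
  simp only [starAnticomm, conjTranspose_smul, smul_mul_smul_comm, hu, hu', one_smul]

theorem starAnticomm_submatrix_equiv [Semiring α] [StarRing α] (M : Matrix n n α) (e : m ≃ n) :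
    starAnticomm (M.submatrix e e) = (starAnticomm M).submatrix e e := by
  simp only [starAnticomm, conjTranspose_submatrix, submatrix_mul_equiv]
  rfl

theorem starAnticomm_fromBlocks_zero [Semiring α] [StarRing α] (A : Matrix m m α)
    (D : Matrix n n α) :
    starAnticomm (fromBlocks A 0 0 D) = fromBlocks (starAnticomm A) 0 0 (starAnticomm D) := by
  simp [starAnticomm, fromBlocks_conjTranspose, fromBlocks_multiply, fromBlocks_add]

theorem starAnticomm_fromBlocks_neg [Ring α] [StarRing α] (B X : Matrix n n α)
    (hX : Xᴴ = X) (hBX : Commute (B + Bᴴ) X) :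
    starAnticomm (fromBlocks B X X (-B)) =
      fromBlocks (starAnticomm B + (X * X + X * X)) 0 0 (starAnticomm B + (X * X + X * X)) := by
  have hBX' : B * X + Bᴴ * X - (X * B + X * Bᴴ) = 0 := by
    simpa only [add_mul, mul_add, sub_eq_zero] using hBX.eq
  simp only [starAnticomm, fromBlocks_conjTranspose, hX, conjTranspose_neg, fromBlocks_multiply,
    fromBlocks_add, mul_neg, neg_mul, neg_neg]
  congr 1
  · abel
  · rw [← hBX']; abel
  · rw [← neg_eq_zero, ← hBX']; abel
  · abel

theorem starAnticomm_nilpotent_fin_two [Semiring α] [StarRing α] :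
    starAnticomm !![(0 : α), 1; 0, 0] = 1 := by
  rw [starAnticomm, conjTranspose, eta_fin_two (!![(0 : α), 1; 0, 0].transpose.map star)]
  simp [one_fin_two]

theorem starAnticomm_eq_smul_one_of_trace_eq_zero [CommRing α] [StarRing α]
    {C : Matrix (Fin 2) (Fin 2) α} (hC : C.trace = 0) :
    starAnticomm C = (C * Cᴴ).trace • (1 : Matrix (Fin 2) (Fin 2) α) := by
  have hC11 : C 1 1 = -C 0 0 := by
    rw [trace_fin_two] at hC
    linear_combination hC
  ext i j
  fin_cases i <;> fin_cases j <;>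
    simp [starAnticomm, mul_apply, Fin.sum_univ_two, trace_fin_two, hC11] <;> ring

theorem commute_add_conjTranspose_starAnticomm_of_star_trace [Field α] [StarRing α]
    [NeZero (2 : α)] {B : Matrix (Fin 2) (Fin 2) α} (hB : star B.trace = B.trace) :
    Commute (B + Bᴴ) (starAnticomm B) := by
  set a := B.trace / 2
  set C := B - a • 1
  have ha : star a = a := by simp [a, hB]
  have hC : C.trace = 0 := by
    simp only [C, a, trace_sub, trace_smul, trace_one, Fintype.card_fin, smul_eq_mul]
    field_simp
    norm_num
  have hBC : B = a • 1 + C := by simp [C]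
  have hBCH : Bᴴ = a • 1 + Cᴴ := by rw [hBC]; simp [conjTranspose_smul, ha]
  set W := C + Cᴴ
  have hsum : B + Bᴴ = (a + a) • 1 + W := by rw [hBCH, hBC]; module
  have hS : starAnticomm B = (a * a + a * a + (C * Cᴴ).trace) • 1 + (a + a) • W := by
    have hSC := starAnticomm_eq_smul_one_of_trace_eq_zero hC
    unfold starAnticomm at hSC ⊢
    rw [hBCH, hBC]
    simp only [add_mul, mul_add, smul_mul_assoc, mul_smul_comm, one_mul, mul_one]
    linear_combination (norm := module) hSC
  have hW : Commute ((a + a) • (1 : Matrix (Fin 2) (Fin 2) α) + W) W :=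
    ((Commute.one_left W).smul_left _).add_left (Commute.refl W)
  rw [hsum, hS]
  exact ((Commute.one_right _).smul_right _).add_right (hW.smul_right _)

section RCLike

variable {𝕜 : Type*} [RCLike 𝕜]

open scoped MatrixOrder in
theorem exists_starAnticomm_fromBlocks_eq_one [DecidableEq n] {B : Matrix n n 𝕜}
    (hB : (1 - starAnticomm B).PosSemidef) (hBS : Commute (B + Bᴴ) (starAnticomm B)) :
    ∃ X, starAnticomm (fromBlocks B X X (-B)) = 1 := by
  set X := CFC.sqrt ((2⁻¹ : ℝ) • (1 - starAnticomm B))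
  have hΔ : 0 ≤ (2⁻¹ : ℝ) • (1 - starAnticomm B) := smul_nonneg (by norm_num) hB.nonneg
  have hXX : X * X = (2⁻¹ : ℝ) • (1 - starAnticomm B) := CFC.sqrt_mul_sqrt_self _ hΔ
  have hX : Xᴴ = X := (CFC.sqrt_nonneg _).posSemidef.isHermitian
  have hBX : Commute (B + Bᴴ) X := by
    rw [show X = cfc NNReal.sqrt _ from CFC.sqrt_eq_cfc]
    exact ((((Commute.one_right _).sub_right hBS).smul_right _).symm.cfc_nnreal _).symm
  refine ⟨X, ?_⟩
  rw [starAnticomm_fromBlocks_neg B X hX hBX, hXX, ← two_smul ℝ, smul_smul]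
  norm_num

theorem exists_dilation_fin_two {B : Matrix (Fin 2) (Fin 2) 𝕜}
    (hB : (1 - starAnticomm B).PosSemidef) :
    ∃ M : Matrix (Fin 2 ⊕ Fin 2) (Fin 2 ⊕ Fin 2) 𝕜, (∀ i j, M (.inl i) (.inl j) = B i j) ∧
      starAnticomm M = 1 := by
  obtain ⟨c, hc, hcB⟩ := RCLike.exists_norm_eq_mul_self B.trace
  have hcc : star c * c = 1 := by simp [RCLike.conj_mul, hc]
  have hcc' : star (star c) * star c = 1 := by rw [star_star, mul_comm, hcc]
  have hBc : star (c • B).trace = (c • B).trace := by simp [trace_smul, ← hcB]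
  rw [← starAnticomm_smul_of_star_mul_self hcc] at hB
  obtain ⟨X, hX⟩ := exists_starAnticomm_fromBlocks_eq_one hB
    (commute_add_conjTranspose_starAnticomm_of_star_trace hBc)
  refine ⟨star c • fromBlocks (c • B) X X (-(c • B)), ?_, ?_⟩
  · intro i j
    simp only [smul_apply, fromBlocks_apply₁₁, smul_eq_mul, ← mul_assoc, hcc, one_mul]
  · rw [starAnticomm_smul_of_star_mul_self hcc', hX]

end RCLike

end Matrix

theorem dilation_for_M2 (B : Matrix (Fin 2) (Fin 2) ℂ)
    (hB : ((1 : Matrix (Fin 2) (Fin 2) ℂ) - (B * Bᴴ + Bᴴ * B)).PosSemidef) :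
    ∃ Bt : Matrix (Fin 6) (Fin 6) ℂ,
      (∀ i j : Fin 2,
        Bt (Fin.castLE (by norm_num) i) (Fin.castLE (by norm_num) j) = B i j) ∧
      Bt * Btᴴ + Btᴴ * Bt = 1 := by
  obtain ⟨M, hMB, hM⟩ := exists_dilation_fin_two hB
  let e : (Fin 2 ⊕ Fin 2) ⊕ Fin 2 ≃ Fin 6 :=
    (finSumFinEquiv.sumCongr (Equiv.refl _)).trans finSumFinEquiv
  have he (i : Fin 2) : Fin.castLE (by norm_num) i = e (.inl (.inl i)) := rfl
  refine ⟨reindex e e (fromBlocks M 0 0 !![0, 1; 0, 0]), fun i j => ?_, ?_⟩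
  · rw [he, he, reindex_apply, submatrix_apply, e.symm_apply_apply, e.symm_apply_apply]
    exact hMB i j
  · change starAnticomm _ = 1
    rw [reindex_apply, starAnticomm_submatrix_equiv, starAnticomm_fromBlocks_zero, hM,
      starAnticomm_nilpotent_fin_two, fromBlocks_one, submatrix_one_equiv]
end

section
/- Let B be the 3×3 complex matrix with entries B(0,2) = 1/√3, B(1,0) = √(2/3), B(2,1) = 1/√3, and all other entries 0 (so that B·Bᴴ + Bᴴ·B = diag(1, 1, 2/3) ≤ I_3). Then for every n ≥ 3 there is no n×n complex matrix B̃ such that B̃(i,j) = B(i,j) for all i, j ∈ Fin 3 (i.e., B is the top-left 3×3 corner of B̃) and B̃·B̃ᴴ + B̃ᴴ·B̃ = I_n. -/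
open Matrix
open scoped ComplexOrder

theorem no_dilation_counterexample (n : ℕ) (hn : 3 ≤ n) :
    ¬ ∃ Bt : Matrix (Fin n) (Fin n) ℂ,
      (∀ i j : Fin 3,
        Bt (Fin.castLE hn i) (Fin.castLE hn j) =
          (!![0, 0, 1 / (Real.sqrt 3 : ℂ);
              ((Real.sqrt (2 / 3) : ℝ) : ℂ), 0, 0;
              0, 1 / (Real.sqrt 3 : ℂ), 0] : Matrix (Fin 3) (Fin 3) ℂ) i j) ∧
      Bt * Btᴴ + Btᴴ * Bt = 1 := by
  rintro ⟨B, h1, h2⟩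
  set i0 : Fin n := Fin.castLE hn 0 with hi0
  set i1 : Fin n := Fin.castLE hn 1 with hi1
  set i2 : Fin n := Fin.castLE hn 2 with hi2
  have ne01 : i0 ≠ i1 := by simp [hi0, hi1, Fin.ext_iff]
  have ne02 : i0 ≠ i2 := by simp [hi0, hi2, Fin.ext_iff]
  have ne12 : i1 ≠ i2 := by simp [hi1, hi2, Fin.ext_iff]
  -- corner entries
  have b02 : B i0 i2 = 1 / (Real.sqrt 3 : ℂ) := by simpa using h1 0 2
  have b10 : B i1 i0 = ((Real.sqrt (2/3) : ℝ) : ℂ) := by simpa using h1 1 0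
  have b21 : B i2 i1 = 1 / (Real.sqrt 3 : ℂ) := by simpa using h1 2 1
  have b00 : B i0 i0 = 0 := by simpa using h1 0 0
  have b01 : B i0 i1 = 0 := by simpa using h1 0 1
  have b11 : B i1 i1 = 0 := by simpa using h1 1 1
  have b12 : B i1 i2 = 0 := by simpa using h1 1 2
  have b20 : B i2 i0 = 0 := by simpa using h1 2 0
  -- normSq values
  have nsA : Complex.normSq (1 / (Real.sqrt 3 : ℂ)) = 1/3 := by
    rw [Complex.normSq_div]
    norm_num [Complex.normSq_ofReal, Real.mul_self_sqrt]
  have nsB : Complex.normSq ((Real.sqrt (2/3) : ℝ) : ℂ) = 2/3 := by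
    norm_num [Complex.normSq_ofReal, Real.mul_self_sqrt]
  have sqrt3_ne : (1 / (Real.sqrt 3 : ℂ)) ≠ 0 := by
    intro h
    have := nsA
    rw [h] at this
    simp at this
  -- entrywise relation
  have key : ∀ i j : Fin n,
      (∑ k, B i k * (starRingEnd ℂ) (B j k)) + ∑ k, (starRingEnd ℂ) (B k i) * B k j
        = if i = j then 1 else 0 := by
    intro i j
    have h := congrFun (congrFun h2 i) j
    simpa [Matrix.mul_apply, Matrix.add_apply, Matrix.one_apply,
      Matrix.conjTranspose_apply] using h
  -- diagonal relation, real form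
  have diag : ∀ i : Fin n,
      (∑ k, Complex.normSq (B i k)) + ∑ k, Complex.normSq (B k i) = 1 := by
    intro i
    have h := key i i
    rw [if_pos rfl] at h
    have h' : (((∑ k, Complex.normSq (B i k)) + ∑ k, Complex.normSq (B k i) : ℝ) : ℂ) = 1 := by
      push_cast
      rw [← h]
      congr 1
      · exact Finset.sum_congr rfl fun k _ => by rw [Complex.mul_conj]
      · exact Finset.sum_congr rfl fun k _ => by
          rw [← Complex.normSq_eq_conj_mul_self]
    exact_mod_cast h'
  -- Step 1: rows/cols 0 vanish outside corner
  have step : ∀ (i : Fin n) (a b : Fin n), a ≠ b →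
      Complex.normSq (B i a) + Complex.normSq (B b i) = 1 →
      (∀ k, k ≠ a → B i k = 0) ∧ (∀ k, k ≠ b → B k i = 0) := by
    intro i a b hab hval
    have hd := diag i
    rw [← Finset.add_sum_erase _ _ (Finset.mem_univ a),
        ← Finset.add_sum_erase _ _ (Finset.mem_univ b)] at hd
    have hz : (∑ k ∈ Finset.univ.erase a, Complex.normSq (B i k)) +
        ∑ k ∈ Finset.univ.erase b, Complex.normSq (B k i) = 0 := by linarith
    have h1z : ∀ k ∈ Finset.univ.erase a, Complex.normSq (B i k) = 0 := by
      intro k hk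
      have hn1 : (0:ℝ) ≤ ∑ k ∈ Finset.univ.erase a, Complex.normSq (B i k) :=
        Finset.sum_nonneg fun _ _ => Complex.normSq_nonneg _
      have hn2 : (0:ℝ) ≤ ∑ k ∈ Finset.univ.erase b, Complex.normSq (B k i) :=
        Finset.sum_nonneg fun _ _ => Complex.normSq_nonneg _
      have : ∑ k ∈ Finset.univ.erase a, Complex.normSq (B i k) = 0 := by linarith
      exact (Finset.sum_eq_zero_iff_of_nonneg
        (fun _ _ => Complex.normSq_nonneg _)).mp this k hk
    have h2z : ∀ k ∈ Finset.univ.erase b, Complex.normSq (B k i) = 0 := by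
      intro k hk
      have hn1 : (0:ℝ) ≤ ∑ k ∈ Finset.univ.erase a, Complex.normSq (B i k) :=
        Finset.sum_nonneg fun _ _ => Complex.normSq_nonneg _
      have hn2 : (0:ℝ) ≤ ∑ k ∈ Finset.univ.erase b, Complex.normSq (B k i) :=
        Finset.sum_nonneg fun _ _ => Complex.normSq_nonneg _
      have : ∑ k ∈ Finset.univ.erase b, Complex.normSq (B k i) = 0 := by linarith
      exact (Finset.sum_eq_zero_iff_of_nonneg
        (fun _ _ => Complex.normSq_nonneg _)).mp this k hk
    refine ⟨fun k hk => ?_, fun k hk => ?_⟩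
    · exact Complex.normSq_eq_zero.mp (h1z k (Finset.mem_erase.mpr ⟨hk, Finset.mem_univ k⟩))
    · exact Complex.normSq_eq_zero.mp (h2z k (Finset.mem_erase.mpr ⟨hk, Finset.mem_univ k⟩))
  obtain ⟨row0, col0⟩ := step i0 i2 i1 (Ne.symm ne12) (by rw [b02, b10, nsA, nsB]; norm_num)
  obtain ⟨row1, col1⟩ := step i1 i0 i2 ne02 (by rw [b10, b21, nsA, nsB]; norm_num)
  -- Step 3: column 2 vanishes outside corner: B k i2 = 0 for k ≠ i0
  have col2 : ∀ k, k ≠ i0 → B k i2 = 0 := by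
    intro k hk
    have h := key k i0
    rw [if_neg hk] at h
    have s1 : (∑ j, B k j * (starRingEnd ℂ) (B i0 j)) = B k i2 * (starRingEnd ℂ) (B i0 i2) := by
      apply Finset.sum_eq_single
      · intro j _ hj
        rw [row0 j hj, map_zero, mul_zero]
      · intro hj; exact absurd (Finset.mem_univ i2) hj
    have s2 : (∑ j, (starRingEnd ℂ) (B j k) * B j i0) = 0 := by
      apply Finset.sum_eq_zero
      intro j _
      by_cases hj : j = i1
      · subst hj
        rw [row1 k (by simpa [eq_comm] using hk), map_zero, zero_mul]
      · rw [col0 j hj, mul_zero]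
    rw [s1, s2, add_zero, mul_eq_zero] at h
    rcases h with h | h
    · exact h
    · exact absurd h (by rw [b02]; simpa using sqrt3_ne)
  -- Step 4: row 2 vanishes outside corner: B i2 k = 0 for k ≠ i1
  have row2 : ∀ k, k ≠ i1 → B i2 k = 0 := by
    intro k hk
    have h := key k i1
    rw [if_neg hk] at h
    have s1 : (∑ j, B k j * (starRingEnd ℂ) (B i1 j)) = 0 := by
      apply Finset.sum_eq_zero
      intro j _
      by_cases hj : j = i0
      · subst hj
        rw [col0 k (by simpa [eq_comm] using hk), zero_mul]
      · rw [row1 j hj, map_zero, mul_zero]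
    have s2 : (∑ j, (starRingEnd ℂ) (B j k) * B j i1) = (starRingEnd ℂ) (B i2 k) * B i2 i1 := by
      apply Finset.sum_eq_single
      · intro j _ hj
        rw [col1 j hj, mul_zero]
      · intro hj; exact absurd (Finset.mem_univ i2) hj
    rw [s1, s2, zero_add, mul_eq_zero] at h
    rcases h with h | h
    · simpa using h
    · exact absurd h (by rw [b21]; simpa using sqrt3_ne)
  -- Step 5: contradiction at entry (2,2)
  have hd := diag i2
  have s1 : (∑ k, Complex.normSq (B i2 k)) = Complex.normSq (B i2 i1) := by
    apply Finset.sum_eq_single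
    · intro j _ hj; rw [row2 j hj, Complex.normSq_zero]
    · intro hj; exact absurd (Finset.mem_univ i1) hj
  have s2 : (∑ k, Complex.normSq (B k i2)) = Complex.normSq (B i0 i2) := by
    apply Finset.sum_eq_single
    · intro j _ hj; rw [col2 j hj, Complex.normSq_zero]
    · intro hj; exact absurd (Finset.mem_univ i0) hj
  rw [s1, s2, b21, b02, nsA] at hd
  norm_num at hd
end

section
/- Let S = { (B₁, B₂) : B₁, B₂ are Hermitian n×n complex matrices with B₁² + B₂² ≤ I_n } (a convex subset of the real vector space of pairs of n×n complex matrices). If B₁, B₂ are Hermitian n×n complex matrices with B₁² + B₂² = I_n, then (B₁, B₂) is an extreme point of S. -/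
/-!
Squaring is strictly convex in the Loewner order on Hermitian matrices, with the exact defect
`a X² + b Y² - (a X + b Y)² = a b (X - Y)²` when `a + b = 1`. If `(B₁, B₂)` is the combination
`a (X₁, X₂) + b (Y₁, Y₂)` of two points of the set and `B₁² + B₂² = 1`, adding the two defects gives
`a b ((X₁ - Y₁)² + (X₂ - Y₂)²) ≤ a • 1 + b • 1 - 1 = 0`; a sum of squares of Hermitian matrices
that is `≤ 0` vanishes, so both endpoints coincide.
-/

open Matrix
open scoped ComplexOrder MatrixOrder

theorem smul_mul_self_add_smul_mul_self_sub_mul_self {R A : Type*} [CommRing R] [Ring A]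
    [Algebra R A] {a b : R} (hab : a + b = 1) (x y : A) :
    a • (x * x) + b • (y * y) - (a • x + b • y) * (a • x + b • y) =
      (a * b) • ((x - y) * (x - y)) := by
  obtain rfl : b = 1 - a := by rw [← hab]; ring
  simp only [mul_sub, sub_mul, add_mul, mul_add, smul_mul_smul_comm, smul_sub]
  match_scalars <;> ring

namespace Matrix

variable {𝕜 n : Type*} [RCLike 𝕜] [Fintype n]

lemma IsHermitian.mul_self_nonneg {X : Matrix n n 𝕜} (hX : X.IsHermitian) : 0 ≤ X * X := by
  simpa only [star_eq_conjTranspose, hX.eq] using star_mul_self_nonneg X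

lemma IsHermitian.mul_self_eq_zero_iff {X : Matrix n n 𝕜} (hX : X.IsHermitian) :
    X * X = 0 ↔ X = 0 := by
  simpa only [hX.eq] using conjTranspose_mul_self_eq_zero (A := X)

lemma IsHermitian.eq_zero_of_mul_self_add_mul_self_nonpos {X Y : Matrix n n 𝕜}
    (hX : X.IsHermitian) (hY : Y.IsHermitian) (h : X * X + Y * Y ≤ 0) : X = 0 ∧ Y = 0 := by
  have hsum : X * X + Y * Y = 0 := le_antisymm h (add_nonneg hX.mul_self_nonneg hY.mul_self_nonneg)
  obtain ⟨hXX, hYY⟩ := (add_eq_zero_iff_of_nonneg hX.mul_self_nonneg hY.mul_self_nonneg).1 hsum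
  exact ⟨hX.mul_self_eq_zero_iff.1 hXX, hY.mul_self_eq_zero_iff.1 hYY⟩

lemma eq_of_convex_comb_mul_self_add_mul_self_eq_one [DecidableEq n]
    {X₁ X₂ Y₁ Y₂ : Matrix n n 𝕜} (hX₁ : X₁.IsHermitian) (hX₂ : X₂.IsHermitian)
    (hY₁ : Y₁.IsHermitian) (hY₂ : Y₂.IsHermitian)
    (hX : X₁ * X₁ + X₂ * X₂ ≤ 1) (hY : Y₁ * Y₁ + Y₂ * Y₂ ≤ 1)
    {a b : ℝ} (ha : 0 < a) (hb : 0 < b) (hab : a + b = 1)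
    (h : (a • X₁ + b • Y₁) * (a • X₁ + b • Y₁) + (a • X₂ + b • Y₂) * (a • X₂ + b • Y₂) = 1) :
    X₁ = Y₁ ∧ X₂ = Y₂ := by
  have hdefect : (a * b) • ((X₁ - Y₁) * (X₁ - Y₁) + (X₂ - Y₂) * (X₂ - Y₂)) ≤ 0 :=
    calc (a * b) • ((X₁ - Y₁) * (X₁ - Y₁) + (X₂ - Y₂) * (X₂ - Y₂))
        = a • (X₁ * X₁ + X₂ * X₂) + b • (Y₁ * Y₁ + Y₂ * Y₂) - 1 := by
          rw [← h, smul_add, ← smul_mul_self_add_smul_mul_self_sub_mul_self hab,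
            ← smul_mul_self_add_smul_mul_self_sub_mul_self hab]
          simp only [smul_add]
          abel
      _ ≤ a • 1 + b • 1 - 1 := by gcongr
      _ = 0 := by rw [← add_smul, hab, one_smul, sub_self]
  rw [← smul_zero (a * b), smul_le_smul_iff_of_pos_left (mul_pos ha hb)] at hdefect
  simpa only [sub_eq_zero] using (hX₁.sub hY₁).eq_zero_of_mul_self_add_mul_self_nonpos
    (hX₂.sub hY₂) hdefect

end Matrix

theorem extreme_point_of_unit_sphere_pairs {n : ℕ}
    (B₁ B₂ : Matrix (Fin n) (Fin n) ℂ)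
    (h₁ : B₁.IsHermitian) (h₂ : B₂.IsHermitian)
    (hsum : B₁ * B₁ + B₂ * B₂ = 1) :
    (B₁, B₂) ∈ Set.extremePoints ℝ
      {p : Matrix (Fin n) (Fin n) ℂ × Matrix (Fin n) (Fin n) ℂ |
        p.1.IsHermitian ∧ p.2.IsHermitian ∧
        ((1 : Matrix (Fin n) (Fin n) ℂ) - (p.1 * p.1 + p.2 * p.2)).PosSemidef} := by
  refine ⟨⟨h₁, h₂, by rw [hsum, sub_self]; exact .zero⟩, ?_⟩
  rintro p ⟨hp₁, hp₂, hp⟩ q ⟨hq₁, hq₂, hq⟩ hB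
  obtain ⟨a, b, ha, hb, hab, hcomb⟩ := hB
  have hB₁ : a • p.1 + b • q.1 = B₁ := congrArg Prod.fst hcomb
  have hB₂ : a • p.2 + b • q.2 = B₂ := congrArg Prod.snd hcomb
  obtain ⟨e₁, e₂⟩ := eq_of_convex_comb_mul_self_add_mul_self_eq_one hp₁ hp₂ hq₁ hq₂ hp hq ha hb hab
    (by rw [hB₁, hB₂, hsum])
  obtain rfl : p = q := Prod.ext e₁ e₂
  rw [← add_smul, hab, one_smul] at hcomb
  exact hcomb
end

section
/- Let B be an n×n complex matrix and let J₃ be the 3×3 Jordan block with zero eigenvalues. Then I_n ⊗ I₃ + B ⊗ J₃ + Bᴴ ⊗ J₃ᴴ is positive semidefinite if and only if B·Bᴴ + Bᴴ·B ≤ I_n. -/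
/-!
Split `x : Fin n × Fin 3 → ℂ` into three blocks `x = vec X` with rows `x₀, x₁, x₂ ∈ ℂⁿ`.
Then `M = 1 ⊗ₖ 1 + B ⊗ₖ J₃ + Bᴴ ⊗ₖ J₃ᴴ` acts as the block matrix
`[[1, B, 0], [Bᴴ, 1, B], [0, Bᴴ, 1]]`, and completing the square gives
`xᴴ M x = ‖x₀ + B x₁‖² + ‖x₂ + Bᴴ x₁‖² + x₁ᴴ (1 - (B Bᴴ + Bᴴ B)) x₁`.
Choosing `x₀ = -B x₁` and `x₂ = -Bᴴ x₁` kills both squares, which gives the forward direction.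
-/

open Matrix Kronecker
open scoped ComplexOrder

/-- The 3×3 Jordan block with zero eigenvalues. -/
def J₃ : Matrix (Fin 3) (Fin 3) ℂ := !![0, 1, 0; 0, 0, 1; 0, 0, 0]

namespace Matrix

variable {m n R : Type*} [Fintype m] [Fintype n]

theorem vec_dotProduct_vec_eq_sum [AddCommMonoid R] [Mul R] (X Y : Matrix m n R) :
    vec X ⬝ᵥ vec Y = ∑ a, X a ⬝ᵥ Y a := by
  simp only [dotProduct, vec, Fintype.sum_prod_type_right]

theorem kronecker_mulVec_vec_apply [CommSemiring R] {l p : Type*} (A : Matrix l n R)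
    (K : Matrix p m R) (X : Matrix m n R) (i : l) (a : p) :
    ((A ⊗ₖ K) *ᵥ vec X) (i, a) = ∑ b, K a b * (A *ᵥ X b) i := by
  simp only [mulVec, dotProduct, vec, kroneckerMap_apply, Fintype.sum_prod_type_right,
    Finset.mul_sum]
  exact Finset.sum_congr rfl fun _ _ => Finset.sum_congr rfl fun _ _ => by ring

/-- Completing the square in the Hermitian form of the block matrix
`[[1, B, 0], [Bᴴ, 1, B], [0, Bᴴ, 1]]`. -/
theorem star_dotProduct_blockTridiag_eq [CommRing R] [StarRing R] [DecidableEq n]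
    (B : Matrix n n R) (x y z : n → R) :
    star x ⬝ᵥ (x + B *ᵥ y) + star y ⬝ᵥ (y + B *ᵥ z + Bᴴ *ᵥ x) + star z ⬝ᵥ (z + Bᴴ *ᵥ y)
      = star (x + B *ᵥ y) ⬝ᵥ (x + B *ᵥ y) + star (z + Bᴴ *ᵥ y) ⬝ᵥ (z + Bᴴ *ᵥ y)
        + star y ⬝ᵥ (1 - (B * Bᴴ + Bᴴ * B)) *ᵥ y := by
  simp only [star_add, star_mulVec, add_dotProduct, dotProduct_add, sub_mulVec, add_mulVec,
    one_mulVec, dotProduct_sub, ← dotProduct_mulVec, mulVec_mulVec, conjTranspose_conjTranspose]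
  ring

end Matrix

theorem kron_J3_mulVec_vec {n : ℕ} (B : Matrix (Fin n) (Fin n) ℂ) (X : Matrix (Fin 3) (Fin n) ℂ) :
    ((1 : Matrix (Fin n) (Fin n) ℂ) ⊗ₖ (1 : Matrix (Fin 3) (Fin 3) ℂ)
        + B ⊗ₖ J₃ + Bᴴ ⊗ₖ J₃ᴴ) *ᵥ vec X
      = vec (of ![X 0 + B *ᵥ X 1, X 1 + B *ᵥ X 2 + Bᴴ *ᵥ X 0, X 2 + Bᴴ *ᵥ X 1]) := by
  ext ⟨i, a⟩
  simp only [add_mulVec, one_kronecker_one, one_mulVec, Pi.add_apply, kronecker_mulVec_vec_apply,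
    Fin.sum_univ_three]
  fin_cases a <;> simp [J₃]

theorem star_vec_dotProduct_kron_J3_mulVec_vec {n : ℕ} (B : Matrix (Fin n) (Fin n) ℂ)
    (X : Matrix (Fin 3) (Fin n) ℂ) :
    star (vec X) ⬝ᵥ ((1 : Matrix (Fin n) (Fin n) ℂ) ⊗ₖ (1 : Matrix (Fin 3) (Fin 3) ℂ)
        + B ⊗ₖ J₃ + Bᴴ ⊗ₖ J₃ᴴ) *ᵥ vec X
      = star (X 0 + B *ᵥ X 1) ⬝ᵥ (X 0 + B *ᵥ X 1) + star (X 2 + Bᴴ *ᵥ X 1) ⬝ᵥ (X 2 + Bᴴ *ᵥ X 1)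
        + star (X 1) ⬝ᵥ (1 - (B * Bᴴ + Bᴴ * B)) *ᵥ X 1 := by
  rw [kron_J3_mulVec_vec, star_vec, vec_dotProduct_vec_eq_sum, Fin.sum_univ_three]
  exact star_dotProduct_blockTridiag_eq B (X 0) (X 1) (X 2)

theorem isHermitian_kron_J3 {n : ℕ} (B : Matrix (Fin n) (Fin n) ℂ) :
    ((1 : Matrix (Fin n) (Fin n) ℂ) ⊗ₖ (1 : Matrix (Fin 3) (Fin 3) ℂ)
        + B ⊗ₖ J₃ + Bᴴ ⊗ₖ J₃ᴴ).IsHermitian := by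
  rw [add_assoc, ← conjTranspose_kronecker, one_kronecker_one]
  exact isHermitian_one.add (isHermitian_add_transpose_self _)

theorem kron_J3_posSemidef_iff {n : ℕ} (B : Matrix (Fin n) (Fin n) ℂ) :
    ((1 : Matrix (Fin n) (Fin n) ℂ) ⊗ₖ (1 : Matrix (Fin 3) (Fin 3) ℂ)
        + B ⊗ₖ J₃ + Bᴴ ⊗ₖ J₃ᴴ).PosSemidef ↔
      ((1 : Matrix (Fin n) (Fin n) ℂ) - (B * Bᴴ + Bᴴ * B)).PosSemidef := by
  have hS : (1 - (B * Bᴴ + Bᴴ * B)).IsHermitian := isHermitian_one.sub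
    ((isHermitian_mul_conjTranspose_self B).add (isHermitian_conjTranspose_mul_self B))
  rw [posSemidef_iff_dotProduct_mulVec, posSemidef_iff_dotProduct_mulVec,
    vec_bijective.surjective.forall]
  simp only [star_vec_dotProduct_kron_J3_mulVec_vec]
  refine and_congr (iff_of_true (isHermitian_kron_J3 B) hS) ⟨fun h y => ?_, fun h X => ?_⟩
  · simpa using h ![-(B *ᵥ y), y, -(Bᴴ *ᵥ y)]
  · exact add_nonneg (add_nonneg (dotProduct_star_self_nonneg _) (dotProduct_star_self_nonneg _))
      (h _)
end

section
/- For all complex numbers α, β, the operator norm of α·J₃ + β·J₃ᴴ equals √(|α|² + |β|²), where J₃ is the 3×3 Jordan block with zero eigenvalues. -/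
open Matrix
open scoped ComplexOrder

/-!
The matrix `α • J₃ + β • J₃ᴴ` sends `x` to `(α x₁, β x₀ + α x₂, β x₁)`. Cauchy–Schwarz on the
middle coordinate bounds the squared norm of the image by `(|α|² + |β|²) ‖x‖²`, with equality
at `x = (β̄, 0, ᾱ)`.
-/

theorem norm_mul_add_mul_sq_le {R : Type*} [NonUnitalSeminormedRing R] (a b z w : R) :
    ‖a * z + b * w‖ ^ 2 ≤ (‖a‖ ^ 2 + ‖b‖ ^ 2) * (‖z‖ ^ 2 + ‖w‖ ^ 2) := by
  have htri : ‖a * z + b * w‖ ≤ ‖a‖ * ‖z‖ + ‖b‖ * ‖w‖ :=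
    (norm_add_le _ _).trans (add_le_add (norm_mul_le a z) (norm_mul_le b w))
  calc ‖a * z + b * w‖ ^ 2 ≤ (‖a‖ * ‖z‖ + ‖b‖ * ‖w‖) ^ 2 := by gcongr
    _ ≤ (‖a‖ ^ 2 + ‖b‖ ^ 2) * (‖z‖ ^ 2 + ‖w‖ ^ 2) := by
      nlinarith [sq_nonneg (‖a‖ * ‖w‖ - ‖b‖ * ‖z‖)]

namespace J₃

variable (α β : ℂ)

theorem smul_add_smul_conjTranspose_mulVec (v : Fin 3 → ℂ) :
    (α • J₃ + β • J₃ᴴ) *ᵥ v = ![α * v 1, β * v 0 + α * v 2, β * v 1] := by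
  ext i
  fin_cases i <;> simp [J₃, mulVec, dotProduct, Fin.sum_univ_three]

theorem norm_sq_toEuclideanCLM_smul_add_smul_conjTranspose (x : EuclideanSpace ℂ (Fin 3)) :
    ‖toEuclideanCLM (𝕜 := ℂ) (α • J₃ + β • J₃ᴴ) x‖ ^ 2 =
      ‖α * x 1‖ ^ 2 + ‖β * x 0 + α * x 2‖ ^ 2 + ‖β * x 1‖ ^ 2 := by
  rw [EuclideanSpace.norm_sq_eq, Fin.sum_univ_three, ofLp_toEuclideanCLM,
    smul_add_smul_conjTranspose_mulVec]
  rfl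

theorem norm_sq_toEuclideanCLM_smul_add_smul_conjTranspose_le (x : EuclideanSpace ℂ (Fin 3)) :
    ‖toEuclideanCLM (𝕜 := ℂ) (α • J₃ + β • J₃ᴴ) x‖ ^ 2 ≤ (‖α‖ ^ 2 + ‖β‖ ^ 2) * ‖x‖ ^ 2 := by
  rw [norm_sq_toEuclideanCLM_smul_add_smul_conjTranspose, EuclideanSpace.norm_sq_eq,
    Fin.sum_univ_three, norm_mul, norm_mul]
  have := norm_mul_add_mul_sq_le β α (x 0) (x 2)
  linarith

theorem norm_toEuclideanCLM_smul_add_smul_conjTranspose_star :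
    ‖toEuclideanCLM (𝕜 := ℂ) (α • J₃ + β • J₃ᴴ) !₂[star β, 0, star α]‖ = ‖α‖ ^ 2 + ‖β‖ ^ 2 := by
  rw [← sq_eq_sq₀ (norm_nonneg _) (by positivity),
    norm_sq_toEuclideanCLM_smul_add_smul_conjTranspose]
  have hs : β * starRingEnd ℂ β + α * starRingEnd ℂ α = ((‖α‖ ^ 2 + ‖β‖ ^ 2 : ℝ) : ℂ) := by
    push_cast
    rw [Complex.mul_conj', Complex.mul_conj', add_comm]
  change ‖α * 0‖ ^ 2 + ‖β * starRingEnd ℂ β + α * starRingEnd ℂ α‖ ^ 2 + ‖β * 0‖ ^ 2 = _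
  rw [hs, Complex.norm_of_nonneg (by positivity), mul_zero, mul_zero, norm_zero]
  ring

end J₃

theorem opNorm_smul_J3_add_smul_J3_conjTranspose (α β : ℂ) :
    opNorm (α • J₃ + β • J₃ᴴ) = Real.sqrt (‖α‖ ^ 2 + ‖β‖ ^ 2) := by
  set s := ‖α‖ ^ 2 + ‖β‖ ^ 2
  set T := toEuclideanCLM (𝕜 := ℂ) (α • J₃ + β • J₃ᴴ)
  refine le_antisymm (T.opNorm_le_bound (Real.sqrt_nonneg s) fun x => ?_) ?_
  · rw [← sq_le_sq₀ (norm_nonneg _) (by positivity), mul_pow, Real.sq_sqrt (by positivity)]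
    exact J₃.norm_sq_toEuclideanCLM_smul_add_smul_conjTranspose_le α β x
  · set x₀ : EuclideanSpace ℂ (Fin 3) := !₂[star β, 0, star α]
    have hx₀ : ‖x₀‖ = √s := by
      rw [← Real.sqrt_sq (norm_nonneg _), EuclideanSpace.norm_sq_eq]
      simp [x₀, s, Fin.sum_univ_three, add_comm]
    calc √s = s / √s := Real.div_sqrt.symm
      _ = ‖T x₀‖ / ‖x₀‖ := by
        rw [hx₀, J₃.norm_toEuclideanCLM_smul_add_smul_conjTranspose_star]
      _ ≤ ‖T‖ := T.ratio_le_opNorm x₀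
end

section
/- Let X be a 2×2 complex matrix with trace zero. Then ‖α·X + β·Xᴴ‖ ≤ √(|α|² + |β|²) holds for all complex numbers α, β if and only if the Frobenius norm of X is at most 1, i.e., √(trace(Xᴴ·X)) ≤ 1. (Equivalently: X belongs to the second matricial range W₂(J₃) of the 3×3 Jordan block J₃ if and only if ‖X‖_F ≤ 1.) -/
open Matrix
open scoped ComplexOrder

/-!
For a traceless 2 × 2 matrix `X` one has `Xᴴ X + X Xᴴ = ‖X‖_F² • 1`, hence
`‖X v‖² + ‖Xᴴ v‖² = ‖X‖_F² ‖v‖²` for every vector `v`, and Cauchy–Schwarz gives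
`‖α X + β Xᴴ‖ ≤ √(|α|² + |β|²) ‖X‖_F`. The bound is attained: over `ℂ` some `v ≠ 0` has `X v`
and `Xᴴ v` on a common line (a kernel vector of `X`, or an eigenvector of `X⁻¹ Xᴴ`), and
Cauchy–Schwarz is an equality for `(α, β)` conjugate to the coefficients of `X v` and `Xᴴ v`.
-/

theorem Matrix.conjTranspose_mul_self_add_mul_conjTranspose_of_trace_eq_zero
    {R : Type*} [CommRing R] [StarRing R] {X : Matrix (Fin 2) (Fin 2) R} (hX : X.trace = 0) :
    Xᴴ * X + X * Xᴴ = (Xᴴ * X).trace • 1 := by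
  have h11 : X 1 1 = -X 0 0 := by
    rw [trace_fin_two] at hX
    linear_combination hX
  ext i j
  fin_cases i <;> fin_cases j <;>
    simp only [Matrix.add_apply, mul_apply, Fin.sum_univ_two, conjTranspose_apply,
      Matrix.smul_apply, one_apply, trace_fin_two] <;> simp [h11] <;> ring

theorem Module.End.exists_ne_zero_apply_eq_smul_and_apply_eq_smul {K V : Type*} [Field K]
    [IsAlgClosed K] [AddCommGroup V] [Module K V] [FiniteDimensional K V] [Nontrivial V]
    (S T : Module.End K V) :
    ∃ v ≠ 0, ∃ z : V, ∃ a b : K, (a ≠ 0 ∨ b ≠ 0) ∧ S v = a • z ∧ T v = b • z := by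
  by_cases hS : Function.Injective S
  · let e := LinearEquiv.ofInjectiveEndo S hS
    obtain ⟨μ, hμ⟩ := Module.End.exists_eigenvalue (e.symm.toLinearMap ∘ₗ T)
    obtain ⟨v, hv⟩ := hμ.exists_hasEigenvector
    refine ⟨v, hv.2, S v, 1, μ, .inl one_ne_zero, (one_smul K _).symm, ?_⟩
    simpa [e] using congrArg e hv.apply_eq_smul
  · obtain ⟨v, hSv, hv⟩ : ∃ v, S v = 0 ∧ v ≠ 0 := by
      simpa [injective_iff_map_eq_zero] using hS
    exact ⟨v, hv, T v, 0, 1, .inr one_ne_zero, by simp [hSv], (one_smul K _).symm⟩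

namespace ContinuousLinearMap

section RCLike

variable {𝕜 E : Type*} [RCLike 𝕜] [NormedAddCommGroup E] [InnerProductSpace 𝕜 E]
  [CompleteSpace E] {T : E →L[𝕜] E} {c : 𝕜}

open RCLike

theorem norm_sq_apply_add_norm_sq_adjoint_apply
    (hT : adjoint T * T + T * adjoint T = c • 1) (v : E) :
    ‖T v‖ ^ 2 + ‖adjoint T v‖ ^ 2 = re c * ‖v‖ ^ 2 := by
  have h := congrArg (fun S : E →L[𝕜] E => re (inner 𝕜 (S v) v)) hT
  simp only [_root_.add_apply, _root_.smul_apply, inner_add_left, inner_smul_left, map_add,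
    one_apply_eq_self, inner_self_eq_norm_sq_to_K] at h
  rw [← ofReal_pow, re_mul_ofReal, conj_re] at h
  rwa [apply_norm_sq_eq_inner_adjoint_left, apply_norm_sq_eq_inner_adjoint_left, adjoint_adjoint]

theorem norm_smul_add_smul_adjoint_le
    (hT : adjoint T * T + T * adjoint T = c • 1) (α β : 𝕜) :
    ‖α • T + β • adjoint T‖ ≤ √(‖α‖ ^ 2 + ‖β‖ ^ 2) * √(re c) := by
  refine opNorm_le_bound _ (by positivity) fun v => ?_
  calc ‖(α • T + β • adjoint T) v‖ ≤ ‖α‖ * ‖T v‖ + ‖β‖ * ‖adjoint T v‖ := by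
        simpa [norm_smul] using norm_add_le (α • T v) (β • adjoint T v)
    _ ≤ √(‖α‖ ^ 2 + ‖β‖ ^ 2) * √(‖T v‖ ^ 2 + ‖adjoint T v‖ ^ 2) := by
        simpa using Real.sum_mul_le_sqrt_mul_sqrt Finset.univ ![‖α‖, ‖β‖] ![‖T v‖, ‖adjoint T v‖]
    _ = √(‖α‖ ^ 2 + ‖β‖ ^ 2) * √(re c) * ‖v‖ := by
        rw [norm_sq_apply_add_norm_sq_adjoint_apply hT, Real.sqrt_mul' _ (sq_nonneg _),
          Real.sqrt_sq (norm_nonneg _), mul_assoc]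

end RCLike

variable {E : Type*} [NormedAddCommGroup E] [InnerProductSpace ℂ E] [FiniteDimensional ℂ E]
  [Nontrivial E] {T : E →L[ℂ] E} {c : ℂ}

theorem exists_sqrt_mul_sqrt_re_le_norm_smul_add_smul_adjoint
    (hT : adjoint T * T + T * adjoint T = c • 1) :
    ∃ α β : ℂ, (α ≠ 0 ∨ β ≠ 0) ∧
      √(‖α‖ ^ 2 + ‖β‖ ^ 2) * √(RCLike.re c) ≤ ‖α • T + β • adjoint T‖ := by
  obtain ⟨v, hv, z, a, b, hab, hTv, hT'v⟩ :=
    Module.End.exists_ne_zero_apply_eq_smul_and_apply_eq_smul (T : E →ₗ[ℂ] E) (adjoint T)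
  set s := ‖a‖ ^ 2 + ‖b‖ ^ 2
  refine ⟨starRingEnd ℂ a, starRingEnd ℂ b, by simpa using hab, ?_⟩
  have hMv : (starRingEnd ℂ a • T + starRingEnd ℂ b • adjoint T) v = (s : ℂ) • z := by
    simp only [_root_.add_apply, _root_.smul_apply]
    rw [← coe_coe T, hTv, ← coe_coe (adjoint T), hT'v, smul_smul, smul_smul, ← add_smul,
      RCLike.conj_mul, RCLike.conj_mul]
    simp [s]
  have hFv : RCLike.re c * ‖v‖ ^ 2 = s * ‖z‖ ^ 2 := by
    rw [← norm_sq_apply_add_norm_sq_adjoint_apply hT, ← coe_coe T, hTv, ← coe_coe (adjoint T),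
      hT'v, norm_smul, norm_smul]
    ring
  have hv' : 0 < ‖v‖ := norm_pos_iff.mpr hv
  refine le_of_mul_le_mul_right ?_ hv'
  calc √(‖starRingEnd ℂ a‖ ^ 2 + ‖starRingEnd ℂ b‖ ^ 2) * √(RCLike.re c) * ‖v‖
      = √s * √(s * ‖z‖ ^ 2) := by
        rw [← hFv, RCLike.norm_conj, RCLike.norm_conj, Real.sqrt_mul' _ (sq_nonneg _),
          Real.sqrt_sq hv'.le, mul_assoc]
    _ = ‖(starRingEnd ℂ a • T + starRingEnd ℂ b • adjoint T) v‖ := by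
        rw [hMv, norm_smul, Real.sqrt_mul' _ (sq_nonneg _), Real.sqrt_sq (norm_nonneg _),
          ← mul_assoc, Real.mul_self_sqrt (by positivity), Complex.norm_real,
          Real.norm_of_nonneg (by positivity)]
    _ ≤ _ := le_opNorm _ _

end ContinuousLinearMap

section
open ContinuousLinearMap

theorem Matrix.toEuclideanCLM_conjTranspose {𝕜 n : Type*} [RCLike 𝕜] [Fintype n] [DecidableEq n]
    (A : Matrix n n 𝕜) : toEuclideanCLM (𝕜 := 𝕜) Aᴴ = adjoint (toEuclideanCLM (𝕜 := 𝕜) A) := by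
  rw [← star_eq_conjTranspose, map_star, star_eq_adjoint]

theorem adjoint_mul_add_mul_adjoint_toEuclideanCLM_of_trace_eq_zero
    {X : Matrix (Fin 2) (Fin 2) ℂ} (hX : X.trace = 0) :
    adjoint (toEuclideanCLM (𝕜 := ℂ) X) * toEuclideanCLM (𝕜 := ℂ) X
        + toEuclideanCLM (𝕜 := ℂ) X * adjoint (toEuclideanCLM (𝕜 := ℂ) X)
      = (Xᴴ * X).trace • 1 := by
  rw [← toEuclideanCLM_conjTranspose, ← map_mul, ← map_mul, ← map_add,
    conjTranspose_mul_self_add_mul_conjTranspose_of_trace_eq_zero hX, map_smul, map_one]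

end

theorem opNorm_smul_add_smul_conjTranspose {k : ℕ} (X : Matrix (Fin k) (Fin k) ℂ) (α β : ℂ) :
    opNorm (α • X + β • Xᴴ) = ‖α • toEuclideanCLM (𝕜 := ℂ) X
      + β • ContinuousLinearMap.adjoint (toEuclideanCLM (𝕜 := ℂ) X)‖ := by
  rw [opNorm, map_add, map_smul, map_smul, toEuclideanCLM_conjTranspose]

theorem trace_zero_W2_iff_frobenius (X : Matrix (Fin 2) (Fin 2) ℂ)
    (hX : X.trace = 0) :
    (∀ α β : ℂ, opNorm (α • X + β • Xᴴ) ≤ Real.sqrt (‖α‖ ^ 2 + ‖β‖ ^ 2)) ↔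
      Real.sqrt ((Xᴴ * X).trace.re) ≤ 1 := by
  have hT := adjoint_mul_add_mul_adjoint_toEuclideanCLM_of_trace_eq_zero hX
  simp only [opNorm_smul_add_smul_conjTranspose]
  constructor
  · intro h
    obtain ⟨α, β, hαβ, hle⟩ :=
      ContinuousLinearMap.exists_sqrt_mul_sqrt_re_le_norm_smul_add_smul_adjoint hT
    have hs : 0 < √(‖α‖ ^ 2 + ‖β‖ ^ 2) := by
      rw [Real.sqrt_pos]
      rcases hαβ with hα | hβ <;> positivity
    exact le_of_mul_le_mul_left (by simpa using hle.trans (h α β)) hs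
  · intro hF α β
    calc _ ≤ √(‖α‖ ^ 2 + ‖β‖ ^ 2) * √((Xᴴ * X).trace.re) :=
          ContinuousLinearMap.norm_smul_add_smul_adjoint_le hT α β
      _ ≤ √(‖α‖ ^ 2 + ‖β‖ ^ 2) := mul_le_of_le_one_right (Real.sqrt_nonneg _) hF
end

section
/- Let X be an m×m complex matrix with X·Xᴴ + Xᴴ·X ≤ I_m. Then for every n ∈ ℕ and every n×n complex matrix B with B·Bᴴ + Bᴴ·B ≤ I_n, the matrix I_n ⊗ I_m + B ⊗ X + Bᴴ ⊗ Xᴴ is positive semidefinite. (Equivalently: every m×m matrix X with X·Xᴴ + Xᴴ·X ≤ I_m belongs to the m-th matricial range W_m(J₃) of the 3×3 Jordan block J₃.) -/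
open Matrix Kronecker
open scoped ComplexOrder

/-! With `P = Bᴴ ⊗ 1 + 1 ⊗ X` and `Q = B ⊗ 1 + 1 ⊗ Xᴴ`, twice the matrix in question equals
`PᴴP + QᴴQ + (1 - (BBᴴ + BᴴB)) ⊗ 1 + 1 ⊗ (1 - (XXᴴ + XᴴX))`: the cross terms of `PᴴP` and `QᴴQ`
each contribute `B ⊗ X + Bᴴ ⊗ Xᴴ`, and their diagonal terms are exactly what the two hypotheses
absorb. All four summands are positive semidefinite. -/

namespace Matrix

section Kronecker

variable {α l m n p : Type*} [NonUnitalNonAssocRing α]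

theorem sub_kronecker (A₁ A₂ : Matrix l m α) (B : Matrix n p α) :
    (A₁ - A₂) ⊗ₖ B = A₁ ⊗ₖ B - A₂ ⊗ₖ B := by
  ext ⟨_, _⟩ ⟨_, _⟩
  simp [sub_mul]

theorem kronecker_sub (A : Matrix l m α) (B₁ B₂ : Matrix n p α) :
    A ⊗ₖ (B₁ - B₂) = A ⊗ₖ B₁ - A ⊗ₖ B₂ := by
  ext ⟨_, _⟩ ⟨_, _⟩
  simp [mul_sub]

end Kronecker

variable {n m : Type*} [Fintype n] [Fintype m] [DecidableEq n] [DecidableEq m]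

theorem two_smul_one_kronecker_one_add_kronecker_add_conjTranspose_kronecker
    {R : Type*} [CommRing R] [StarRing R] (B : Matrix n n R) (X : Matrix m m R) :
    (2 : R) • (1 ⊗ₖ 1 + B ⊗ₖ X + Bᴴ ⊗ₖ Xᴴ) =
      (Bᴴ ⊗ₖ 1 + 1 ⊗ₖ X)ᴴ * (Bᴴ ⊗ₖ 1 + 1 ⊗ₖ X) + (B ⊗ₖ 1 + 1 ⊗ₖ Xᴴ)ᴴ * (B ⊗ₖ 1 + 1 ⊗ₖ Xᴴ)
        + (1 - (B * Bᴴ + Bᴴ * B)) ⊗ₖ 1 + 1 ⊗ₖ (1 - (X * Xᴴ + Xᴴ * X)) := by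
  simp only [conjTranspose_add, conjTranspose_kronecker, conjTranspose_one,
    conjTranspose_conjTranspose, add_mul, mul_add, ← mul_kronecker_mul, Matrix.one_mul,
    Matrix.mul_one, sub_kronecker, kronecker_sub, add_kronecker, kronecker_add, one_kronecker_one,
    two_smul]
  abel

theorem PosSemidef.one_kronecker_one_add_kronecker_add_conjTranspose_kronecker
    {𝕜 : Type*} [RCLike 𝕜] {B : Matrix n n 𝕜} {X : Matrix m m 𝕜}
    (hB : (1 - (B * Bᴴ + Bᴴ * B)).PosSemidef) (hX : (1 - (X * Xᴴ + Xᴴ * X)).PosSemidef) :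
    (1 ⊗ₖ 1 + B ⊗ₖ X + Bᴴ ⊗ₖ Xᴴ).PosSemidef := by
  have h2 : ((2 : 𝕜) • (1 ⊗ₖ 1 + B ⊗ₖ X + Bᴴ ⊗ₖ Xᴴ)).PosSemidef := by
    rw [two_smul_one_kronecker_one_add_kronecker_add_conjTranspose_kronecker]
    exact (((posSemidef_conjTranspose_mul_self _).add (posSemidef_conjTranspose_mul_self _)).add
      (hB.kronecker .one)).add (PosSemidef.one.kronecker hX)
  simpa [smul_smul] using h2.smul (a := (2⁻¹ : 𝕜)) (by positivity)

end Matrix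

theorem matricial_range_J3_containment {m : ℕ} (X : Matrix (Fin m) (Fin m) ℂ)
    (hX : ((1 : Matrix (Fin m) (Fin m) ℂ) - (X * Xᴴ + Xᴴ * X)).PosSemidef) :
    ∀ (n : ℕ) (B : Matrix (Fin n) (Fin n) ℂ),
      ((1 : Matrix (Fin n) (Fin n) ℂ) - (B * Bᴴ + Bᴴ * B)).PosSemidef →
      ((1 : Matrix (Fin n) (Fin n) ℂ) ⊗ₖ (1 : Matrix (Fin m) (Fin m) ℂ)
          + B ⊗ₖ X + Bᴴ ⊗ₖ Xᴴ).PosSemidef :=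
  fun _ _ hB => PosSemidef.one_kronecker_one_add_kronecker_add_conjTranspose_kronecker hB hX
end
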